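/- arXiv:1207.0119 — 13 statements merged into one kernel-verified Lean document; each statement's English description precedes it below -/
import Mathlib

section
/- Let L be a function algebra on a set I. For all ℓ₁, …, ℓₙ ∈ L there exists ℓ ∈ L with E_ℓ ⊆ E_{ℓ₁,…,ℓₙ}; consequently the single-element equivalence relations {E_ℓ : ℓ ∈ L} form a base of the uniformity of Z(L). -/
open scoped Uniformity

/-- `L` is a function algebra on `I` with value type `A`. -/
def IsFnAlg {A I : Type*} (L : Set (I → A)) : Prop :=
  (∀ a : A, (fun _ : I => a) ∈ L) ∧
    ∀ (n : ℕ) (f : (Fin n → A) → A) (g : Fin n → I → A),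
      (∀ i, g i ∈ L) → (fun x : I => f fun i => g i x) ∈ L

/-- A homomorphism from the function algebra `L` to `A`. -/
def IsHom {A I : Type*} (L : Set (I → A)) (φ : L → A) : Prop :=
  (∀ (a : A) (h : (fun _ : I => a) ∈ L), φ ⟨fun _ => a, h⟩ = a) ∧
    ∀ (n : ℕ) (f : (Fin n → A) → A) (g : Fin n → I → A) (hg : ∀ i, g i ∈ L)
      (h : (fun x : I => f fun i => g i x) ∈ L),
      φ ⟨fun x => f fun i => g i x, h⟩ = f fun i => φ ⟨g i, hg i⟩

/-- `Z(L)`: the set of all homomorphisms from `L` to `A`, as a subtype of `A^L`. -/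
abbrev Zt {A I : Type*} (L : Set (I → A)) : Type _ := {φ : L → A // IsHom L φ}

/-- `B_A(X)`: the function algebra of all uniformly continuous maps `X → A`. -/
def BA (A X : Type*) [UniformSpace A] [UniformSpace X] : Set (X → A) :=
  {f : X → A | UniformContinuous f}

/-- A homomorphism between function algebras. -/
def IsAlgHom {A I J : Type*} (L : Set (I → A)) (M : Set (J → A)) (Φ : L → M) : Prop :=
  (∀ (a : A) (h : (fun _ : I => a) ∈ L), ((Φ ⟨fun _ => a, h⟩ : M) : J → A) = fun _ => a) ∧
    ∀ (n : ℕ) (f : (Fin n → A) → A) (g : Fin n → I → A) (hg : ∀ i, g i ∈ L)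
      (h : (fun x : I => f fun i => g i x) ∈ L),
      ((Φ ⟨fun x => f fun i => g i x, h⟩ : M) : J → A) =
        fun y => f fun i => (Φ ⟨g i, hg i⟩ : J → A) y

/-- The kernel of a map `φ : L → A`. -/
def kerOf {A I : Type*} {L : Set (I → A)} (φ : L → A) : Set (L × L) :=
  {p | φ p.1 = φ p.2}

/-- The subalgebra generated by a set `S` of functions. -/
def genBy {A I : Type*} (S : Set (I → A)) : Set (I → A) :=
  ⋂₀ {M : Set (I → A) | IsFnAlg M ∧ S ⊆ M}

/-- A congruence on the function algebra `L`. -/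
def IsCongruence {A I : Type*} (L : Set (I → A)) (θ : Set (L × L)) : Prop :=
  Equivalence (fun g h : L => (g, h) ∈ θ) ∧
    ∀ (n : ℕ) (f : (Fin n → A) → A) (g h : Fin n → L),
      (∀ i, (g i, h i) ∈ θ) →
      ∀ (hg : (fun x : I => f fun i => (g i : I → A) x) ∈ L)
        (hh : (fun x : I => f fun i => (h i : I → A) x) ∈ L),
        ((⟨fun x => f fun i => (g i : I → A) x, hg⟩ : L),
          (⟨fun x => f fun i => (h i : I → A) x, hh⟩ : L)) ∈ θ

/-- The restriction `θ ∩ (N × N)` of a congruence to a subalgebra `N ⊆ L`. -/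
def restrictCong {A I : Type*} {L N : Set (I → A)} (hNL : N ⊆ L) (θ : Set (L × L)) :
    Set (N × N) :=
  {p | ((⟨p.1.1, hNL p.1.2⟩ : L), (⟨p.2.1, hNL p.2.2⟩ : L)) ∈ θ}

/-- A partitionable congruence: an intersection of kernels of homomorphisms into `A`. -/
def IsPartCong {A I : Type*} (L : Set (I → A)) (θ : Set (L × L)) : Prop :=
  IsCongruence L θ ∧ ∃ R : Set (Zt L), θ = ⋂ φ ∈ R, kerOf (φ : Zt L).1

/-- A locally partitionable congruence: its restriction to every finitely generated
subalgebra is partitionable. -/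
def IsLocPartCong {A I : Type*} (L : Set (I → A)) (θ : Set (L × L)) : Prop :=
  IsCongruence L θ ∧
    ∀ (N : Set (I → A)) (hNL : N ⊆ L), (∃ S : Set (I → A), S.Finite ∧ N = genBy S) →
      IsPartCong N (restrictCong hNL θ)

lemma exists_emb_stmt2 (A : Type*) [Infinite A] (n : ℕ) : Nonempty ((Fin n → A) ↪ A) := by
  rw [← Cardinal.lift_mk_le', Cardinal.mk_arrow]
  simp only [Cardinal.mk_fin, Cardinal.lift_natCast, Cardinal.lift_power, Cardinal.lift_lift,
    Cardinal.lift_id, Cardinal.lift_id']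
  exact Cardinal.power_nat_le (Cardinal.aleph0_le_mk A)

/-- For all `ℓ₁, …, ℓₙ ∈ L` there exists `ℓ ∈ L` with
`E_ℓ ⊆ E_{ℓ₁,…,ℓₙ}`; consequently the single-element equivalence relations
`{E_ℓ : ℓ ∈ L}` form a basis of the uniformity of `Z(L)`. -/
theorem stmt2 {A I : Type*} [Infinite A] [uA : UniformSpace A] (huA : uA = ⊥)
    (L : Set (I → A)) (hL : IsFnAlg L) :
    (∀ (n : ℕ) (g : Fin n → L), ∃ ℓ : L,
        {p : Zt L × Zt L | p.1.1 ℓ = p.2.1 ℓ} ⊆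
          {p : Zt L × Zt L | ∀ i, p.1.1 (g i) = p.2.1 (g i)}) ∧
    (𝓤 (Zt L)).HasBasis (fun _ : L => True)
      (fun ℓ => {p : Zt L × Zt L | p.1.1 ℓ = p.2.1 ℓ}) := by
  have key : ∀ (n : ℕ) (g : Fin n → L), ∃ ℓ : L,
      {p : Zt L × Zt L | p.1.1 ℓ = p.2.1 ℓ} ⊆
        {p : Zt L × Zt L | ∀ i, p.1.1 (g i) = p.2.1 (g i)} := by
    intro n g
    obtain ⟨e⟩ := exists_emb_stmt2 A n
    have hmem : (fun x : I => e fun i => (g i : I → A) x) ∈ L :=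
      hL.2 n e (fun i => (g i : I → A)) (fun i => (g i).2)
    refine ⟨⟨_, hmem⟩, ?_⟩
    intro p hp i
    have h1 := p.1.2.2 n e (fun i => (g i : I → A)) (fun i => (g i).2) hmem
    have h2 := p.2.2.2 n e (fun i => (g i : I → A)) (fun i => (g i).2) hmem
    have : (fun i => p.1.1 (g i)) = fun i => p.2.1 (g i) := by
      apply e.injective
      rw [← h1, ← h2]
      exact hp
    exact congrFun this i
  refine ⟨key, ?_⟩
  have hA : 𝓤 A = Filter.principal SetRel.id := by rw [huA]; exact bot_uniformity
  have hne : Nonempty L := ⟨⟨_, hL.1 (Classical.arbitrary A)⟩⟩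
  have hU : 𝓤 (Zt L) = ⨅ ℓ : L, Filter.principal
      {p : Zt L × Zt L | p.1.1 ℓ = p.2.1 ℓ} := by
    rw [uniformity_subtype, Pi.uniformity, Filter.comap_iInf]
    congr 1
    funext ℓ
    rw [hA, Filter.comap_principal, Filter.comap_principal]
    congr 1
  rw [hU]
  refine Filter.hasBasis_iInf_principal ?_
  intro ℓ₁ ℓ₂
  obtain ⟨ℓ, hℓ⟩ := key 2 ![ℓ₁, ℓ₂]
  exact ⟨ℓ, fun p hp => by simpa using hℓ hp 0, fun p hp => by simpa using hℓ hp 1⟩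
end

section
/- Let L be a function algebra on a set I and define ρ(ℓ) : Z(L) → A by ρ(ℓ)(φ) = φ(ℓ). Then each ρ(ℓ) is uniformly continuous, ρ is a homomorphism of function algebras from L to B_A(Z(L)), and ρ is surjective: every uniformly continuous function from Z(L) to A equals ρ(ℓ) for some ℓ ∈ L. -/
open scoped Uniformity

/-- Each `ρ(ℓ) : Z(L) → A`, `ρ(ℓ)(φ) = φ(ℓ)`, is uniformly continuous
(i.e. belongs to `B_A(Z(L))`), `ρ` is a homomorphism of function algebras from `L`
to `B_A(Z(L))`, and `ρ` is surjective onto `B_A(Z(L))`. -/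
theorem stmt3 {A I : Type*} [Infinite A] [uA : UniformSpace A] (huA : uA = ⊥)
    (L : Set (I → A)) (hL : IsFnAlg L) :
    ∃ hmem : ∀ ℓ : L, (fun φ : Zt L => φ.1 ℓ) ∈ BA A (Zt L),
      IsAlgHom L (BA A (Zt L))
        (fun ℓ : L => (⟨fun φ : Zt L => φ.1 ℓ, hmem ℓ⟩ : BA A (Zt L))) ∧
      Function.Surjective
        (fun ℓ : L => (⟨fun φ : Zt L => φ.1 ℓ, hmem ℓ⟩ : BA A (Zt L))) := by
  classical
  refine ⟨fun ℓ =>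
    (Pi.uniformContinuous_proj (fun _ : L => A) ℓ).comp uniformContinuous_subtype_val,
    ⟨?_, ?_⟩, ?_⟩
  · intro a h
    funext φ
    exact φ.2.1 a h
  · intro n f g hg h
    funext φ
    exact φ.2.2 n f g hg h
  · rintro ⟨f, hf⟩
    have hU : 𝓤 (Zt L) = ⨅ ℓ : L, Filter.principal {p : Zt L × Zt L | p.1.1 ℓ = p.2.1 ℓ} := by
      rw [uniformity_subtype, Pi.uniformity, Filter.comap_iInf]
      refine iInf_congr fun ℓ => ?_
      rw [huA, bot_uniformity, Filter.comap_principal, Filter.comap_principal]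
      congr 1
    have hid : (SetRel.id : SetRel A A) ∈ 𝓤 A := by
      rw [huA, bot_uniformity]; exact Filter.mem_principal_self _
    have hS : {p : Zt L × Zt L | f p.1 = f p.2} ∈ 𝓤 (Zt L) := by
      filter_upwards [hf hid] with p hp
      exact hp
    rw [hU] at hS
    obtain ⟨t, htfin, V, hV, hSeq⟩ := Filter.mem_iInf.mp hS
    have key : ∀ φ ψ : Zt L, (∀ g : t, φ.1 g = ψ.1 g) → f φ = f ψ := by
      intro φ ψ hgw
      have hmem2 : (φ, ψ) ∈ ⋂ i : t, V i := by
        refine Set.mem_iInter.mpr fun i => ?_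
        have hVi := Filter.mem_principal.mp (hV i)
        exact hVi (hgw i)
      rw [← hSeq] at hmem2
      exact hmem2
    haveI := htfin.fintype
    set n := Fintype.card t with hn
    set e : Fin n ≃ t := (Fintype.equivFin t).symm with he
    set g : Fin n → I → A := fun i => ((e i : L) : I → A) with hgdef
    have hg : ∀ i, g i ∈ L := fun i => (e i : L).2
    set F : (Fin n → A) → A := fun v =>
      if h : ∃ φ : Zt L, (fun i => φ.1 (e i : L)) = v then f h.choose
      else Classical.arbitrary A with hF
    have hℓ : (fun x : I => F fun i => g i x) ∈ L := hL.2 n F g hg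
    refine ⟨⟨fun x => F fun i => g i x, hℓ⟩, ?_⟩
    refine Subtype.ext ?_
    funext φ
    show φ.1 ⟨fun x => F fun i => g i x, hℓ⟩ = f φ
    rw [φ.2.2 n F g hg hℓ]
    have hv : (fun i => φ.1 ⟨g i, hg i⟩) = fun i => φ.1 (e i : L) := by
      funext i
      congr 1
    rw [hv]
    have hex : ∃ ψ : Zt L, (fun i => ψ.1 (e i : L)) = fun i => φ.1 (e i : L) := ⟨φ, rfl⟩
    have hFv : F (fun i => φ.1 (e i : L)) = f hex.choose := dif_pos hex
    rw [hFv]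
    refine key hex.choose φ fun gm => ?_
    have hspec := hex.choose_spec
    have hi := congrFun hspec (Fintype.equivFin t gm)
    have hegm : e (Fintype.equivFin t gm) = gm := by
      simp [he]
    rw [hegm] at hi
    exact hi
end

section
/- Let L be a function algebra on a set I. Then the map ρ : L → B_A(Z(L)) defined by ρ(ℓ)(φ) = φ(ℓ) is injective, and hence is a bijective homomorphism (an isomorphism) from L onto the function algebra B_A(Z(L)) of all uniformly continuous functions from Z(L) to A. -/
open scoped Uniformity

/-- The map `ρ : L → B_A(Z(L))`, `ρ(ℓ)(φ) = φ(ℓ)`, is injective, hence a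
bijective homomorphism (an isomorphism) of `L` onto the function algebra `B_A(Z(L))`. -/
theorem stmt4 {A I : Type*} [Infinite A] [uA : UniformSpace A] (huA : uA = ⊥)
    (L : Set (I → A)) (hL : IsFnAlg L) :
    ∃ hmem : ∀ ℓ : L, (fun φ : Zt L => φ.1 ℓ) ∈ BA A (Zt L),
      Function.Injective
        (fun ℓ : L => (⟨fun φ : Zt L => φ.1 ℓ, hmem ℓ⟩ : BA A (Zt L))) ∧
      IsAlgHom L (BA A (Zt L))
        (fun ℓ : L => (⟨fun φ : Zt L => φ.1 ℓ, hmem ℓ⟩ : BA A (Zt L))) ∧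
      Function.Bijective
        (fun ℓ : L => (⟨fun φ : Zt L => φ.1 ℓ, hmem ℓ⟩ : BA A (Zt L))) := by
  classical
  have hbot : 𝓤 A = Filter.principal SetRel.id := by rw [huA]; rfl
  have hmem : ∀ ℓ : L, (fun φ : Zt L => φ.1 ℓ) ∈ BA A (Zt L) := by
    intro ℓ
    show UniformContinuous fun φ : Zt L => φ.1 ℓ
    exact (Pi.uniformContinuous_proj (fun _ : L => A) ℓ).comp uniformContinuous_subtype_val
  have evhom : ∀ x : I, IsHom L (fun g : L => (g : I → A) x) := by
    intro x
    exact ⟨fun a h => rfl, fun n f g hg h => rfl⟩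
  have hinj : Function.Injective
      (fun ℓ : L => (⟨fun φ : Zt L => φ.1 ℓ, hmem ℓ⟩ : BA A (Zt L))) := by
    intro ℓ₁ ℓ₂ h
    have h' := congrArg Subtype.val h
    ext x
    exact congrFun h' ⟨fun g => (g : I → A) x, evhom x⟩
  refine ⟨hmem, hinj, ⟨?_, ?_⟩, hinj, ?_⟩
  · intro a h
    funext φ
    exact φ.2.1 a h
  · intro n f g hg h
    funext φ
    exact φ.2.2 n f g hg h
  · -- surjectivity
    rintro ⟨u, hu⟩
    -- the set where u is constant is an entourage of Zt L
    have hS : {p : Zt L × Zt L | u p.1 = u p.2} ∈ 𝓤 (Zt L) := by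
      have : SetRel.id ∈ 𝓤 A := by
        rw [hbot]; exact Filter.mem_principal_self _
      exact hu this
    rw [uniformity_subtype, Filter.mem_comap] at hS
    obtain ⟨T, hT, hTS⟩ := hS
    rw [Pi.uniformity] at hT
    simp only [hbot, Filter.comap_principal] at hT
    rw [Filter.mem_iInf] at hT
    obtain ⟨F, hF, V, hV, hTeq⟩ := hT
    -- key fact: homomorphisms agreeing on F give the same u-value
    have key : ∀ φ ψ : Zt L, (∀ ℓ ∈ F, φ.1 ℓ = ψ.1 ℓ) → u φ = u ψ := by
      intro φ ψ hagree
      have hmemT : ((φ, ψ) : Zt L × Zt L) ∈ (fun q : Zt L × Zt L => ((q.1 : L → A), (q.2 : L → A))) ⁻¹' T := by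
        show (φ.1, ψ.1) ∈ T
        rw [hTeq]
        refine Set.mem_iInter.2 fun ℓ => ?_
        have hVl := hV ℓ
        rw [Filter.mem_principal] at hVl
        exact hVl (hagree ℓ ℓ.2)
      exact hTS hmemT
    haveI := hF.fintype
    set n := Fintype.card F with hn
    set e : Fin n ≃ F := (Fintype.equivFin F).symm with he
    set g : Fin n → I → A := fun i => (((e i : L) : I → A)) with hgdef
    have hg : ∀ i, g i ∈ L := fun i => (e i : L).2
    haveI : Nonempty A := inferInstance
    set f : (Fin n → A) → A := fun a =>
      if h : ∃ φ : Zt L, ∀ i, φ.1 (e i : L) = a i then u h.choose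
      else Classical.arbitrary A with hfdef
    have hℓ : (fun x : I => f fun i => g i x) ∈ L := hL.2 n f g hg
    refine ⟨⟨fun x => f fun i => g i x, hℓ⟩, ?_⟩
    apply Subtype.ext
    funext φ
    show φ.1 ⟨fun x => f fun i => g i x, hℓ⟩ = u φ
    have h1 : φ.1 ⟨fun x => f fun i => g i x, hℓ⟩ = f fun i => φ.1 ⟨g i, hg i⟩ :=
      φ.2.2 n f g hg hℓ
    rw [h1]
    have hex : ∃ ψ : Zt L, ∀ i, ψ.1 (e i : L) = φ.1 ⟨g i, hg i⟩ := ⟨φ, fun i => rfl⟩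
    rw [hfdef]
    simp only [dif_pos hex]
    apply key
    intro ℓ hℓF
    have h4 : ((e (e.symm ⟨ℓ, hℓF⟩) : F) : L) = ℓ := by rw [Equiv.apply_symm_apply]
    have h2 := hex.choose_spec (e.symm ⟨ℓ, hℓF⟩)
    rw [h4] at h2
    exact h2.trans (congrArg φ.1 h4)
end

section
/- For every uniform space X, the evaluation map C : X → Z(B_A(X)) defined by C(x)(f) = f(x) is uniformly continuous, and its image C''(X) is dense in Z(B_A(X)). -/
open scoped Uniformity

/-- Key lemma: any homomorphism agrees with some evaluation on any finite set of functions. -/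
lemma key_eval {A X : Type*} [Infinite A] [UniformSpace A] [UniformSpace X]
    (φ : Zt (BA A X)) (s : Finset (BA A X)) :
    ∃ x : X, ∀ f ∈ s, f.1 x = φ.1 f := by
  classical
  by_contra hcon
  push_neg at hcon
  set n := s.card with hn
  set e : Fin n ≃ s := s.equivFin.symm with he
  set g : Fin n → X → A := fun i => ((e i : s) : BA A X).1 with hgdef
  have hg : ∀ i, g i ∈ BA A X := fun i => ((e i : s) : BA A X).2
  obtain ⟨a, b, hab⟩ := exists_pair_ne A
  set F : (Fin n → A) → A :=
    fun v => if v = (fun i => φ.1 ((e i : s) : BA A X)) then a else b with hF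
  have hne : ∀ x : X, (fun i => g i x) ≠ (fun i => φ.1 ((e i : s) : BA A X)) := by
    intro x hx
    obtain ⟨f, hfs, hfx⟩ := hcon x
    have := congrFun hx (e.symm ⟨f, hfs⟩)
    simp only [g, Equiv.apply_symm_apply] at this
    exact hfx this
  have heq : (fun x : X => F fun i => g i x) = fun _ : X => b := by
    funext x
    exact if_neg (hne x)
  have hm : (fun x : X => F fun i => g i x) ∈ BA A X := by
    simp only [BA, Set.mem_setOf_eq]
    rw [heq]
    exact uniformContinuous_const
  have h1 := φ.2.2 n F g hg hm
  have h2 : φ.1 ⟨fun x : X => F fun i => g i x, hm⟩ = b := by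
    have : (⟨fun x : X => F fun i => g i x, hm⟩ : BA A X)
        = ⟨fun _ : X => b, uniformContinuous_const⟩ := Subtype.ext heq
    rw [this]
    exact φ.2.1 b _
  have h3 : (F fun i => φ.1 ⟨g i, hg i⟩) = a := by
    have : (fun i => φ.1 ⟨g i, hg i⟩) = fun i => φ.1 ((e i : s) : BA A X) := by
      funext i; rfl
    rw [this, hF]
    exact if_pos rfl
  rw [h2, h3] at h1
  exact hab h1.symm

/-- For every uniform space `X`, the evaluation map
`C : X → Z(B_A(X))`, `C(x)(f) = f(x)`, is well defined (each `C(x)` is a homomorphism),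
uniformly continuous, and has dense image in `Z(B_A(X))`. -/
theorem stmt5 {A X : Type*} [Infinite A] [uA : UniformSpace A] (huA : uA = ⊥)
    [UniformSpace X] :
    ∃ hhom : ∀ x : X, IsHom (BA A X) (fun f : BA A X => f.1 x),
      UniformContinuous
        (fun x : X => (⟨fun f : BA A X => f.1 x, hhom x⟩ : Zt (BA A X))) ∧
      Dense (Set.range
        (fun x : X => (⟨fun f : BA A X => f.1 x, hhom x⟩ : Zt (BA A X)))) := by
  have hhom : ∀ x : X, IsHom (BA A X) (fun f : BA A X => f.1 x) := by
    intro x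
    exact ⟨fun a h => rfl, fun n f g hg h => rfl⟩
  refine ⟨hhom, ?_, ?_⟩
  · apply UniformContinuous.subtype_mk
    rw [uniformContinuous_pi]
    intro f
    exact f.2
  · haveI : DiscreteTopology A := ⟨by rw [huA]; exact UniformSpace.toTopologicalSpace_bot⟩
    intro φ
    rw [mem_closure_iff_nhds]
    intro t ht
    rw [mem_nhds_induced] at ht
    obtain ⟨u, hu, hsub⟩ := ht
    rw [nhds_pi] at hu
    simp only [nhds_discrete] at hu
    rw [Filter.mem_pi] at hu
    obtain ⟨I, hIfin, tt, htt, hpi⟩ := hu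
    obtain ⟨x, hx⟩ := key_eval φ hIfin.toFinset
    refine ⟨⟨fun f : BA A X => f.1 x, hhom x⟩, ?_, Set.mem_range_self x⟩
    apply hsub
    apply hpi
    intro f hf
    have := hx f (hIfin.mem_toFinset.2 hf)
    simpa [this] using htt f
end

section
/- Let X be a separated non-Archimedean uniform space. Then the evaluation map C : X → Z(B_A(X)) defined by C(x)(f) = f(x) is injective. -/
open scoped Uniformity

/-- If `X` is a separated non-Archimedean uniform space, then the
evaluation map `C : X → Z(B_A(X))`, `C(x)(f) = f(x)`, is injective. -/
theorem stmt6 {A X : Type*} [Infinite A] [uA : UniformSpace A] (huA : uA = ⊥)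
    [UniformSpace X]
    (hNA : (𝓤 X).HasBasis
      (fun E : Set (X × X) => E ∈ 𝓤 X ∧ Equivalence (fun x y : X => (x, y) ∈ E)) id)
    (hsep : ⋂₀ (𝓤 X).sets = SetRel.id) :
    ∃ hhom : ∀ x : X, IsHom (BA A X) (fun f : BA A X => f.1 x),
      Function.Injective
        (fun x : X => (⟨fun f : BA A X => f.1 x, hhom x⟩ : Zt (BA A X))) := by
  classical
  have hUA : 𝓤 A = Filter.principal SetRel.id := huA ▸ bot_uniformity
  refine ⟨fun x => ⟨fun a h => rfl, fun n f g hg h => rfl⟩, fun x y hxy => ?_⟩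
  by_contra hne
  have hni : (x, y) ∉ SetRel.id := fun h => hne (by simpa using h)
  rw [← hsep] at hni
  obtain ⟨E, hE, hxyE⟩ : ∃ E ∈ (𝓤 X).sets, (x, y) ∉ E := by
    by_contra hc
    push_neg at hc
    exact hni (Set.mem_sInter.mpr hc)
  obtain ⟨E', ⟨hE', hEq⟩, hsub⟩ := hNA.mem_iff.mp hE
  obtain ⟨a, b, hab⟩ := exists_pair_ne A
  set f : X → A := fun z => if (x, z) ∈ E' then a else b with hf
  have hfU : UniformContinuous f := by
    rw [UniformContinuous, hUA, Filter.tendsto_principal]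
    refine Filter.mem_of_superset hE' ?_
    rintro ⟨z, w⟩ hzw
    have hiff : (x, z) ∈ E' ↔ (x, w) ∈ E' :=
      ⟨fun h => hEq.trans h hzw, fun h => hEq.trans h (hEq.symm hzw)⟩
    simp only [hf, Set.mem_preimage, SetRel.mem_id, Set.mem_setOf_eq]
    by_cases hxz : (x, z) ∈ E'
    · rw [if_pos hxz, if_pos (hiff.mp hxz)]
    · rw [if_neg hxz, if_neg (fun h => hxz (hiff.mpr h))]
  have hfx : f x = a := by simp only [hf]; exact if_pos (hEq.refl x)
  have hfy : f y = b := by simp only [hf]; exact if_neg (fun h => hxyE (hsub h))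
  have hfe : f x = f y := congrFun (congrArg Subtype.val hxy) ⟨f, hfU⟩
  exact hab (hfx ▸ hfy ▸ hfe)
end

section
/- Let X be a separated non-Archimedean uniform space that is |A|⁺-totally bounded. Then the evaluation map C : X → Z(B_A(X)) defined by C(x)(f) = f(x) is a uniform embedding: C is injective and, for subsets of X, an entourage condition holds in X if and only if its image condition holds in Z(B_A(X)) (i.e., C is a uniform homeomorphism onto its image). -/
open scoped Uniformity

/-- If `X` is a separated non-Archimedean `|A|⁺`-totally bounded uniform
space, then the evaluation map `C : X → Z(B_A(X))` is a uniform embedding. -/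
theorem stmt7 {A : Type u} {X : Type w} [Infinite A] [uA : UniformSpace A] (huA : uA = ⊥)
    [UniformSpace X]
    (hNA : (𝓤 X).HasBasis
      (fun E : Set (X × X) => E ∈ 𝓤 X ∧ Equivalence (fun x y : X => (x, y) ∈ E)) id)
    (hsep : ⋂₀ (𝓤 X).sets = SetRel.id)
    (htb : ∀ E ∈ 𝓤 X, Equivalence (fun x y : X => (x, y) ∈ E) →
      Cardinal.lift.{u} (Cardinal.mk (Quot fun x y : X => (x, y) ∈ E)) ≤
        Cardinal.lift.{w} (Cardinal.mk A)) :
    ∃ hhom : ∀ x : X, IsHom (BA A X) (fun f : BA A X => f.1 x),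
      IsUniformEmbedding
        (fun x : X => (⟨fun f : BA A X => f.1 x, hhom x⟩ : Zt (BA A X))) := by
  have hUA : 𝓤 A = Filter.principal SetRel.id := by subst huA; rfl
  have hhom : ∀ x : X, IsHom (BA A X) (fun f : BA A X => f.1 x) :=
    fun x => ⟨fun a h => rfl, fun n f g hg h => rfl⟩
  have key : ∀ E ∈ 𝓤 X, Equivalence (fun x y : X => (x, y) ∈ E) →
      ∃ f : X → A, UniformContinuous f ∧ ∀ x y, f x = f y ↔ (x, y) ∈ E := by
    intro E hE hEq
    obtain ⟨j⟩ := Cardinal.lift_mk_le'.1 (htb E hE hEq)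
    have hker : ∀ x y, j (Quot.mk _ x) = j (Quot.mk _ y) ↔ (x, y) ∈ E := by
      intro x y
      rw [j.injective.eq_iff, Quot.eq, hEq.eqvGen_iff]
    refine ⟨fun x => j (Quot.mk _ x), ?_, hker⟩
    rw [UniformContinuous, hUA, Filter.tendsto_principal]
    exact Filter.mem_of_superset hE (fun p hp => (hker p.1 p.2).2 hp)
  refine ⟨hhom, ⟨?_⟩, ?_⟩
  · -- comap_uniformity
    have hcom : Filter.comap
        (fun p : X × X => ((⟨fun f : BA A X => f.1 p.1, hhom p.1⟩ : Zt (BA A X)),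
          (⟨fun f : BA A X => f.1 p.2, hhom p.2⟩ : Zt (BA A X)))) (𝓤 (Zt (BA A X)))
        = ⨅ f : BA A X, Filter.principal {p : X × X | f.1 p.1 = f.1 p.2} := by
      rw [uniformity_subtype, Pi.uniformity, Filter.comap_iInf, Filter.comap_iInf]
      refine iInf_congr fun f => ?_
      rw [Filter.comap_comap, Filter.comap_comap, hUA, Filter.comap_principal]
      rfl
    rw [hcom]
    refine le_antisymm ?_ (le_iInf fun f => Filter.le_principal_iff.2 ?_)
    · intro s hs
      obtain ⟨E, ⟨hE, hEq⟩, hEs⟩ := hNA.mem_iff.1 hs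
      obtain ⟨f, hf, hker⟩ := key E hE hEq
      exact Filter.mem_of_superset
        (Filter.mem_iInf_of_mem
          (f := fun g : BA A X => Filter.principal {p : X × X | g.1 p.1 = g.1 p.2})
          ⟨f, hf⟩ (Filter.mem_principal.2 fun p hp => (hker p.1 p.2).1 hp)) hEs
    · have hf : Filter.Tendsto (fun p : X × X => (f.1 p.1, f.1 p.2)) (𝓤 X) (𝓤 A) := f.2
      rw [hUA, Filter.tendsto_principal] at hf
      exact hf
  · -- injective
    intro x y hxy
    have hfun : ∀ f : BA A X, f.1 x = f.1 y :=
      fun f => congrFun (congrArg Subtype.val hxy) f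
    have hmem : (x, y) ∈ ⋂₀ (𝓤 X).sets := by
      intro s hs
      obtain ⟨E, ⟨hE, hEq⟩, hEs⟩ := hNA.mem_iff.1 hs
      obtain ⟨f, hf, hker⟩ := key E hE hEq
      exact hEs ((hker x y).1 (hfun ⟨f, hf⟩))
    rw [hsep] at hmem
    exact hmem
end

section
/- Let X be a complete separated non-Archimedean uniform space that is |A|⁺-totally bounded. Then the evaluation map C : X → Z(B_A(X)) defined by C(x)(f) = f(x) is a uniform homeomorphism (a bijection that is uniformly continuous with uniformly continuous inverse). -/
open scoped Uniformity

set_option linter.unusedSectionVars false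

section MyAux

variable {A : Type u} {X : Type w} [UniformSpace X]

lemma my_uc_bot_iff [uA : UniformSpace A] (huA : uA = ⊥) (f : X → A) :
    UniformContinuous f ↔ {p : X × X | f p.1 = f p.2} ∈ 𝓤 X := by
  have hU : 𝓤 A = Filter.principal (SetRel.id : Set (A × A)) := by rw [huA]; exact bot_uniformity
  simp only [UniformContinuous, hU, Filter.tendsto_principal, Filter.eventually_iff, SetRel.mem_id]

lemma my_BA_const_mem [uA : UniformSpace A] (a : A) : (fun _ : X => a) ∈ BA A X :=
  uniformContinuous_const

lemma my_BA_comp_mem [uA : UniformSpace A] (huA : uA = ⊥) {n : ℕ}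
    (f : (Fin n → A) → A) (g : Fin n → X → A) (hg : ∀ i, g i ∈ BA A X) :
    (fun x : X => f fun i => g i x) ∈ BA A X := by
  show UniformContinuous fun x : X => f fun i => g i x
  have h1 : (⋂ i, {p : X × X | g i p.1 = g i p.2}) ∈ 𝓤 X :=
    Filter.iInter_mem.mpr fun i => (my_uc_bot_iff huA (g i)).mp (hg i)
  refine (my_uc_bot_iff huA _).mpr (Filter.mem_of_superset h1 ?_)
  rintro ⟨x, y⟩ hxy
  simp only [Set.mem_iInter, Set.mem_setOf_eq] at hxy ⊢
  exact congrArg f (funext fun i => hxy i)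

lemma my_hom_unary {L : Set (X → A)} {φ : L → A} (hφ : IsHom L φ) (σ : A → A)
    (g : X → A) (hg : g ∈ L) (h : (fun x => σ (g x)) ∈ L) :
    φ ⟨fun x => σ (g x), h⟩ = σ (φ ⟨g, hg⟩) :=
  hφ.2 1 (fun v => σ (v 0)) (fun _ => g) (fun _ => hg) h

lemma my_hom_binary {L : Set (X → A)} {φ : L → A} (hφ : IsHom L φ) (p : A → A → A)
    (g₁ g₂ : X → A) (h₁ : g₁ ∈ L) (h₂ : g₂ ∈ L)
    (h : (fun x => p (g₁ x) (g₂ x)) ∈ L) :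
    φ ⟨fun x => p (g₁ x) (g₂ x), h⟩ = p (φ ⟨g₁, h₁⟩) (φ ⟨g₂, h₂⟩) :=
  hφ.2 2 (fun v => p (v 0) (v 1)) (Fin.cons g₁ fun _ => g₂)
    (fun i => Fin.cases h₁ (fun _ => h₂) i) h

lemma my_hom_mem_range {L : Set (X → A)} {φ : L → A} (hφ : IsHom L φ) (hX : Nonempty X)
    (hcomp : ∀ (σ : A → A) (g : X → A), g ∈ L → (fun x => σ (g x)) ∈ L)
    (g : X → A) (hg : g ∈ L) : φ ⟨g, hg⟩ ∈ Set.range g := by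
  classical
  obtain ⟨x₀⟩ := hX
  set σ : A → A := fun a => if a ∈ Set.range g then a else g x₀ with hσ
  have hσg : (fun x => σ (g x)) = g := funext fun x => by simp [hσ]
  have h1 := my_hom_unary hφ σ g hg (hcomp σ g hg)
  rw [show (⟨fun x => σ (g x), hcomp σ g hg⟩ : L) = ⟨g, hg⟩ from Subtype.ext hσg] at h1
  by_cases hr : φ ⟨g, hg⟩ ∈ Set.range g
  · exact hr
  · rw [h1, hσ]
    simp only [hr, if_false]
    exact Set.mem_range_self x₀

end MyAux

/-- If `X` is a complete separated non-Archimedean `|A|⁺`-totally bounded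
uniform space, then the evaluation map `C : X → Z(B_A(X))` is a uniform homeomorphism
(a bijection, uniformly continuous with uniformly continuous inverse). -/
theorem stmt8 {A : Type u} {X : Type w} [Infinite A] [uA : UniformSpace A] (huA : uA = ⊥)
    [UniformSpace X] [CompleteSpace X]
    (hNA : (𝓤 X).HasBasis
      (fun E : Set (X × X) => E ∈ 𝓤 X ∧ Equivalence (fun x y : X => (x, y) ∈ E)) id)
    (hsep : ⋂₀ (𝓤 X).sets = (SetRel.id : Set (X × X)))
    (htb : ∀ E ∈ 𝓤 X, Equivalence (fun x y : X => (x, y) ∈ E) →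
      Cardinal.lift.{u} (Cardinal.mk (Quot fun x y : X => (x, y) ∈ E)) ≤
        Cardinal.lift.{w} (Cardinal.mk A)) :
    ∃ hhom : ∀ x : X, IsHom (BA A X) (fun f : BA A X => f.1 x),
      ∃ e : X ≃ᵤ Zt (BA A X),
        ⇑e = fun x : X => (⟨fun f : BA A X => f.1 x, hhom x⟩ : Zt (BA A X)) := by
  classical
  have hhom : ∀ x : X, IsHom (BA A X) (fun f : BA A X => f.1 x) :=
    fun x => ⟨fun a h => rfl, fun n f g hg h => rfl⟩
  refine ⟨hhom, ?_⟩
  set ev : X → Zt (BA A X) := fun x => ⟨fun f => f.1 x, hhom x⟩ with hev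
  -- separating uniformly continuous functions with prescribed kernel
  have fex : ∀ E ∈ 𝓤 X, ∀ hEq : Equivalence (fun x y : X => (x, y) ∈ E),
      ∃ f : X → A, f ∈ BA A X ∧ ∀ x y : X, f x = f y ↔ (x, y) ∈ E := by
    intro E hE hEq
    obtain ⟨j⟩ := Cardinal.lift_mk_le'.mp (htb E hE hEq)
    refine ⟨fun x => j (Quot.mk _ x), ?_, ?_⟩
    · show UniformContinuous fun x => j (Quot.mk _ x)
      refine (my_uc_bot_iff huA _).mpr (Filter.mem_of_superset hE ?_)
      rintro ⟨x, y⟩ hxy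
      exact congrArg j (Quot.sound hxy)
    · intro x y
      constructor
      · intro h
        exact hEq.eqvGen_iff.mp (Quot.eqvGen_exact (j.injective h))
      · intro h
        exact congrArg j (Quot.sound h)
  -- injectivity
  have hinj : Function.Injective ev := by
    intro x y hxy
    by_contra hne
    have hmem : (x, y) ∉ ⋂₀ (𝓤 X).sets := by
      rw [hsep]; exact fun h => hne h
    obtain ⟨V, hV, hxyV⟩ : ∃ V ∈ (𝓤 X).sets, (x, y) ∉ V := by
      by_contra hcon
      push_neg at hcon
      exact hmem (Set.mem_sInter.mpr hcon)
    obtain ⟨E, ⟨hE, hEq⟩, hEV⟩ := hNA.mem_iff.mp hV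
    obtain ⟨f, hfBA, hfker⟩ := fex E hE hEq
    have hfe : f x = f y := congrFun (congrArg Subtype.val hxy) ⟨f, hfBA⟩
    exact hxyV (hEV ((hfker x y).mp hfe))
  -- pairing embedding
  obtain ⟨pe⟩ : Nonempty (A × A ↪ A) := by
    refine (Cardinal.le_def _ _).mp ?_
    have h1 : Cardinal.mk (A × A) = Cardinal.mk A := by
      rw [Cardinal.mk_prod]
      simp [Cardinal.mul_eq_self (Cardinal.aleph0_le_mk A)]
    exact h1.le
  have hcomp : ∀ (σ : A → A) (g : X → A), g ∈ BA A X → (fun x => σ (g x)) ∈ BA A X :=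
    fun σ g hg => my_BA_comp_mem huA (n := 1) (fun v => σ (v 0)) (fun _ => g) (fun _ => hg)
  have hpairmem : ∀ g₁ g₂ : X → A, g₁ ∈ BA A X → g₂ ∈ BA A X →
      (fun x => pe (g₁ x, g₂ x)) ∈ BA A X := fun g₁ g₂ h₁ h₂ =>
    my_BA_comp_mem huA (n := 2) (fun v => pe (v 0, v 1)) (Fin.cons g₁ fun _ => g₂)
      (fun i => Fin.cases h₁ (fun _ => h₂) i)
  -- surjectivity
  have hsurj : Function.Surjective ev := by
    intro φ
    rcases isEmpty_or_nonempty X with hX | hX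
    · exfalso
      obtain ⟨a, b, hab⟩ := exists_pair_ne A
      have h1 := φ.2.1 a (my_BA_const_mem a)
      have h2 := φ.2.1 b (my_BA_const_mem b)
      have h3 : (⟨fun _ => a, my_BA_const_mem a⟩ : BA A X) =
          ⟨fun _ => b, my_BA_const_mem b⟩ :=
        Subtype.ext (funext fun x => (hX.false x).elim)
      rw [h3, h2] at h1
      exact hab h1.symm
    · let S : BA A X → Set X := fun g => {x | g.1 x = φ.1 g}
      have hSne : ∀ g : BA A X, (S g).Nonempty := by
        intro g
        obtain ⟨x, hx⟩ := my_hom_mem_range φ.2 hX hcomp g.1 g.2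
        exact ⟨x, hx⟩
      have hSpair : ∀ g₁ g₂ : BA A X,
          S ⟨fun x => pe (g₁.1 x, g₂.1 x), hpairmem _ _ g₁.2 g₂.2⟩ ⊆ S g₁ ∩ S g₂ := by
        intro g₁ g₂ x hx
        have hx' : pe (g₁.1 x, g₂.1 x) =
            φ.1 ⟨fun x => pe (g₁.1 x, g₂.1 x), hpairmem _ _ g₁.2 g₂.2⟩ := hx
        have hb := my_hom_binary φ.2 (fun a b => pe (a, b)) g₁.1 g₂.1 g₁.2 g₂.2
          (hpairmem _ _ g₁.2 g₂.2)
        rw [hb] at hx'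
        have h4 := Prod.ext_iff.mp (pe.injective hx')
        exact ⟨h4.1, h4.2⟩
      haveI : Nonempty (BA A X) := ⟨⟨fun _ => Classical.arbitrary A, my_BA_const_mem _⟩⟩
      have hdir : Directed (· ≥ ·) S := by
        intro g₁ g₂
        exact ⟨⟨fun x => pe (g₁.1 x, g₂.1 x), hpairmem _ _ g₁.2 g₂.2⟩,
          fun x hx => ((hSpair g₁ g₂) hx).1, fun x hx => ((hSpair g₁ g₂) hx).2⟩
      set F : Filter X := ⨅ g : BA A X, Filter.principal (S g) with hF
      have hbasis : F.HasBasis (fun _ : BA A X => True) S :=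
        Filter.hasBasis_iInf_principal hdir
      haveI hFne : F.NeBot := hbasis.neBot_iff.mpr fun {i} _ => hSne i
      have hcauchy : Cauchy F := by
        rw [cauchy_iff]
        refine ⟨hFne, fun V hV => ?_⟩
        obtain ⟨E, ⟨hE, hEq⟩, hEV⟩ := hNA.mem_iff.mp hV
        obtain ⟨f, hfBA, hfker⟩ := fex E hE hEq
        refine ⟨S ⟨f, hfBA⟩, hbasis.mem_of_mem trivial, ?_⟩
        rintro ⟨x, y⟩ ⟨hx, hy⟩
        exact hEV ((hfker x y).mp ((hx : f x = _).trans (hy : f y = _).symm))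
      obtain ⟨x₀, hx₀⟩ := CompleteSpace.complete hcauchy
      refine ⟨x₀, ?_⟩
      apply Subtype.ext
      funext g
      show g.1 x₀ = φ.1 g
      obtain ⟨E, ⟨hE, hEq⟩, hEker⟩ := hNA.mem_iff.mp ((my_uc_bot_iff huA g.1).mp g.2)
      have h1 : UniformSpace.ball x₀ E ∈ F := hx₀ (UniformSpace.ball_mem_nhds x₀ hE)
      have h2 : S g ∈ F := hbasis.mem_of_mem trivial
      obtain ⟨y, hy1, hy2⟩ := Filter.nonempty_of_mem (Filter.inter_mem h1 h2)
      have h3 : g.1 x₀ = g.1 y := hEker hy1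
      exact h3.trans hy2
  let eqv : X ≃ Zt (BA A X) := Equiv.ofBijective ev ⟨hinj, hsurj⟩
  have hUC : UniformContinuous ev := by
    apply UniformContinuous.subtype_mk
    rw [uniformContinuous_pi]
    intro g
    exact g.2
  have hUCinv : UniformContinuous ⇑eqv.symm := by
    intro V hV
    rw [Filter.mem_map]
    obtain ⟨E, ⟨hE, hEq⟩, hEV⟩ := hNA.mem_iff.mp hV
    obtain ⟨f, hfBA, hfker⟩ := fex E hE hEq
    have hcoord : UniformContinuous (fun ψ : Zt (BA A X) => ψ.1 ⟨f, hfBA⟩) :=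
      (Pi.uniformContinuous_proj _ _).comp uniformContinuous_subtype_val
    have hid : (SetRel.id : Set (A × A)) ∈ 𝓤 A := by
      rw [huA, bot_uniformity]; exact Filter.mem_principal_self _
    have hmem : {p : Zt (BA A X) × Zt (BA A X) | p.1.1 ⟨f, hfBA⟩ = p.2.1 ⟨f, hfBA⟩} ∈
        𝓤 (Zt (BA A X)) :=
      Filter.mem_of_superset (Filter.mem_map.mp (hcoord hid)) fun p hp => hp
    refine Filter.mem_of_superset hmem ?_
    rintro ⟨ψ₁, ψ₂⟩ hψ
    have hψ' : ψ₁.1 ⟨f, hfBA⟩ = ψ₂.1 ⟨f, hfBA⟩ := hψ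
    have hx : ev (eqv.symm ψ₁) = ψ₁ := eqv.apply_symm_apply ψ₁
    have hy : ev (eqv.symm ψ₂) = ψ₂ := eqv.apply_symm_apply ψ₂
    show (eqv.symm ψ₁, eqv.symm ψ₂) ∈ V
    apply hEV
    show (eqv.symm ψ₁, eqv.symm ψ₂) ∈ E
    rw [← hfker]
    have h1 : f (eqv.symm ψ₁) = ψ₁.1 ⟨f, hfBA⟩ :=
      congrFun (congrArg Subtype.val hx) ⟨f, hfBA⟩
    have h2 : f (eqv.symm ψ₂) = ψ₂.1 ⟨f, hfBA⟩ :=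
      congrFun (congrArg Subtype.val hy) ⟨f, hfBA⟩
    rw [h1, h2, hψ']
  exact ⟨⟨eqv, hUC, hUCinv⟩, rfl⟩
end

section
/- Let L be a function algebra on a set I and let ρ_L : L → B_A(Z(L)) be defined by ρ_L(ℓ)(φ) = φ(ℓ). Then the maps Z(ρ_L) : Z(B_A(Z(L))) → Z(L), Z(ρ_L)(Ψ) = Ψ ∘ ρ_L, and C_{Z(L)} : Z(L) → Z(B_A(Z(L))), C_{Z(L)}(φ)(g) = g(φ), are mutually inverse bijections; in particular Z(ρ_L) ∘ C_{Z(L)} is the identity on Z(L). -/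
open scoped Uniformity

/-- The maps `Z(ρ_L) : Z(B_A(Z(L))) → Z(L)`, `Ψ ↦ Ψ ∘ ρ_L`, and
`C_{Z(L)} : Z(L) → Z(B_A(Z(L)))`, `φ ↦ (g ↦ g(φ))`, are mutually inverse bijections;
in particular `Z(ρ_L) ∘ C_{Z(L)}` is the identity on `Z(L)`. -/
theorem stmt11 {A I : Type*} [Infinite A] [uA : UniformSpace A] (huA : uA = ⊥)
    (L : Set (I → A)) (hL : IsFnAlg L) :
    ∃ hρ : ∀ ℓ : L, (fun φ : Zt L => φ.1 ℓ) ∈ BA A (Zt L),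
      ∃ hC : ∀ φ : Zt L, IsHom (BA A (Zt L)) (fun g : BA A (Zt L) => g.1 φ),
        ∃ hZρ : ∀ Ψ : Zt (BA A (Zt L)),
            IsHom L (fun ℓ : L => Ψ.1 ⟨fun φ : Zt L => φ.1 ℓ, hρ ℓ⟩),
          Function.LeftInverse
            (fun Ψ : Zt (BA A (Zt L)) =>
              (⟨fun ℓ : L => Ψ.1 ⟨fun φ : Zt L => φ.1 ℓ, hρ ℓ⟩, hZρ Ψ⟩ : Zt L))
            (fun φ : Zt L =>
              (⟨fun g : BA A (Zt L) => g.1 φ, hC φ⟩ : Zt (BA A (Zt L)))) ∧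
          Function.LeftInverse
            (fun φ : Zt L =>
              (⟨fun g : BA A (Zt L) => g.1 φ, hC φ⟩ : Zt (BA A (Zt L))))
            (fun Ψ : Zt (BA A (Zt L)) =>
              (⟨fun ℓ : L => Ψ.1 ⟨fun φ : Zt L => φ.1 ℓ, hρ ℓ⟩, hZρ Ψ⟩ : Zt L)) := by
  classical
  have hub : 𝓤 A = Filter.principal SetRel.id := by rw [huA]; exact bot_uniformity
  have hρ : ∀ ℓ : L, (fun φ : Zt L => φ.1 ℓ) ∈ BA A (Zt L) := by
    intro ℓ
    simp only [BA, Set.mem_setOf_eq]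
    exact (Pi.uniformContinuous_proj (fun _ : L => A) ℓ).comp uniformContinuous_subtype_val
  have hC : ∀ φ : Zt L, IsHom (BA A (Zt L)) (fun g : BA A (Zt L) => g.1 φ) :=
    fun φ => ⟨fun a h => rfl, fun n f g hg h => rfl⟩
  have hZρ : ∀ Ψ : Zt (BA A (Zt L)),
      IsHom L (fun ℓ : L => Ψ.1 ⟨fun φ : Zt L => φ.1 ℓ, hρ ℓ⟩) := by
    intro Ψ
    constructor
    · intro a h
      have e1 : (fun φ : Zt L => φ.1 ⟨fun _ => a, h⟩) = fun _ : Zt L => a := by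
        funext φ; exact φ.2.1 a h
      have m : (fun _ : Zt L => a) ∈ BA A (Zt L) := uniformContinuous_const
      have e2 : (⟨fun φ : Zt L => φ.1 ⟨fun _ => a, h⟩, hρ _⟩ : BA A (Zt L)) = ⟨_, m⟩ :=
        Subtype.ext e1
      show Ψ.1 ⟨fun φ : Zt L => φ.1 ⟨fun _ => a, h⟩, hρ _⟩ = a
      rw [e2]
      exact Ψ.2.1 a m
    · intro n f g hg h
      have e1 : (fun φ : Zt L => φ.1 ⟨fun x => f fun i => g i x, h⟩)
          = fun φ : Zt L => f fun i => φ.1 ⟨g i, hg i⟩ := by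
        funext φ; exact φ.2.2 n f g hg h
      have m : (fun φ : Zt L => f fun i => φ.1 ⟨g i, hg i⟩) ∈ BA A (Zt L) := by
        rw [← e1]; exact hρ _
      have e2 : (⟨fun φ : Zt L => φ.1 ⟨fun x => f fun i => g i x, h⟩, hρ _⟩ : BA A (Zt L))
          = ⟨_, m⟩ := Subtype.ext e1
      show Ψ.1 ⟨fun φ : Zt L => φ.1 ⟨fun x => f fun i => g i x, h⟩, hρ _⟩
          = f fun i => Ψ.1 ⟨fun φ : Zt L => φ.1 ⟨g i, hg i⟩, hρ _⟩
      rw [e2]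
      exact Ψ.2.2 n f (fun i φ => φ.1 ⟨g i, hg i⟩) (fun i => hρ _) m
  refine ⟨hρ, hC, hZρ, ?_, ?_⟩
  · intro φ; exact Subtype.ext rfl
  · intro Ψ
    apply Subtype.ext
    funext g
    set φΨ : Zt L := ⟨fun ℓ => Ψ.1 ⟨fun φ : Zt L => φ.1 ℓ, hρ ℓ⟩, hZρ Ψ⟩ with hφΨ
    -- `g` depends only on finitely many coordinates
    obtain ⟨n, ℓ, hdep⟩ : ∃ (n : ℕ) (ℓ : Fin n → L),
        ∀ x y : Zt L, (∀ i, x.1 (ℓ i) = y.1 (ℓ i)) → g.1 x = g.1 y := by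
      have hK : (Prod.map g.1 g.1) ⁻¹' SetRel.id ∈ 𝓤 (Zt L) := by
        refine g.2 ?_
        rw [hub]
        exact Filter.mem_principal_self _
      rw [uniformity_subtype, Filter.mem_comap] at hK
      obtain ⟨s, hs, hsub⟩ := hK
      rw [Pi.uniformity] at hs
      rw [Filter.mem_iInf] at hs
      obtain ⟨F, hFfin, V, hV, hsEq⟩ := hs
      obtain ⟨n, e, he⟩ := hFfin.fin_embedding
      refine ⟨n, fun i => e i, ?_⟩
      intro x y hxy
      have hmem : (x.1, y.1) ∈ s := by
        rw [hsEq]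
        refine Set.mem_iInter.2 fun j => ?_
        have hVj := hV j
        rw [hub, Filter.mem_comap] at hVj
        obtain ⟨t, ht, htsub⟩ := hVj
        rw [Filter.mem_principal] at ht
        -- j.1 ∈ F = range e
        obtain ⟨i, hi⟩ : ∃ i : Fin n, e i = (j : L) := by
          have : (j : L) ∈ Set.range e := he ▸ j.2
          exact this
        refine htsub ?_
        refine ht ?_
        show x.1 (j : L) = y.1 (j : L)
        rw [← hi]; exact hxy i
      have h2 : ((x, y) : Zt L × Zt L) ∈ (fun q : Zt L × Zt L => (q.1.1, q.2.1)) ⁻¹' s :=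
        hmem
      exact hsub h2
    set f : (Fin n → A) → A := fun v =>
      if h : ∃ φ : Zt L, (fun i => φ.1 (ℓ i)) = v then g.1 h.choose else g.1 φΨ
      with hf
    have hgf : ∀ φ : Zt L, g.1 φ = f (fun i => φ.1 (ℓ i)) := by
      intro φ
      have h : ∃ φ' : Zt L, (fun i => φ'.1 (ℓ i)) = fun i => φ.1 (ℓ i) := ⟨φ, rfl⟩
      rw [hf]
      simp only [dif_pos h]
      exact hdep φ h.choose (fun i => (congrFun h.choose_spec i).symm)
    have m : (fun φ : Zt L => f fun i => φ.1 (ℓ i)) ∈ BA A (Zt L) := by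
      have hg2 := g.2
      rwa [show g.1 = fun φ : Zt L => f fun i => φ.1 (ℓ i) from funext hgf] at hg2
    have eg : g = ⟨fun φ : Zt L => f fun i => φ.1 (ℓ i), m⟩ := Subtype.ext (funext hgf)
    show g.1 φΨ = Ψ.1 g
    calc g.1 φΨ = f fun i => φΨ.1 (ℓ i) := hgf φΨ
      _ = f fun i => Ψ.1 ⟨fun φ : Zt L => φ.1 (ℓ i), hρ _⟩ := rfl
      _ = Ψ.1 ⟨fun φ : Zt L => f fun i => φ.1 (ℓ i), m⟩ :=
          (Ψ.2.2 n f (fun i φ => φ.1 (ℓ i)) (fun i => hρ _) m).symm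
      _ = Ψ.1 g := by rw [eg]
end

section
/- Let X be a uniform space. Then the maps B_A(C_X) : B_A(Z(B_A(X))) → B_A(X), B_A(C_X)(g) = g ∘ C_X, and ρ_{B_A(X)} : B_A(X) → B_A(Z(B_A(X))), ρ_{B_A(X)}(f)(φ) = φ(f), are mutually inverse bijections; in particular B_A(C_X) ∘ ρ_{B_A(X)} is the identity on B_A(X). -/
open scoped Uniformity

private theorem keylem {A I : Type*} [uA : UniformSpace A]
    (hUA : 𝓤 A = Filter.principal SetRel.id)
    (L : Set (I → A)) (g : Zt L → A) (hg : UniformContinuous g) :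
    ∃ (n : ℕ) (ℓ : Fin n → L), ∀ φ ψ : Zt L, (∀ i, φ.1 (ℓ i) = ψ.1 (ℓ i)) → g φ = g ψ := by
  have h1 : {p : Zt L × Zt L | g p.1 = g p.2} ∈ 𝓤 (Zt L) := by
    have := hg (by rw [hUA]; exact Filter.mem_principal_self SetRel.id)
    simpa [SetRel.id] using this
  rw [uniformity_subtype, Filter.mem_comap] at h1
  obtain ⟨S, hS, hSsub⟩ := h1
  rw [Pi.uniformity] at hS
  simp only [hUA, Filter.comap_principal] at hS
  rw [Filter.mem_iInf'] at hS
  obtain ⟨F, hFfin, V, hV, -, hS1, -⟩ := hS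
  simp only [Filter.mem_principal] at hV
  haveI := hFfin.fintype
  refine ⟨Fintype.card F, fun i => ((Fintype.equivFin F).symm i : L), fun φ ψ hag => ?_⟩
  have hmem : (φ.1, ψ.1) ∈ S := by
    rw [hS1]
    refine Set.mem_iInter₂.2 fun ℓ hℓ => ?_
    have := hag (Fintype.equivFin F ⟨ℓ, hℓ⟩)
    simp only [Equiv.symm_apply_apply] at this
    exact hV ℓ (by simpa [SetRel.id] using this)
  have hmem' : ((φ, ψ) : Zt L × Zt L) ∈ (fun q : Zt L × Zt L => ((q.1 : ↑L → A), (q.2 : ↑L → A))) ⁻¹' S := hmem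
  exact hSsub hmem'

private theorem exspec {A I : Type*} [Infinite A] {L : Set (I → A)} {n : ℕ}
    (ℓ : Fin n → L) (g : Zt L → A)
    (hg : ∀ φ ψ : Zt L, (∀ i, φ.1 (ℓ i) = ψ.1 (ℓ i)) → g φ = g ψ) :
    ∃ f : (Fin n → A) → A, ∀ φ : Zt L, f (fun i => φ.1 (ℓ i)) = g φ := by
  classical
  refine ⟨fun a =>
    if h : ∃ ψ : Zt L, ∀ i, ψ.1 (ℓ i) = a i then g h.choose else Classical.arbitrary A,
    fun φ => ?_⟩
  have h : ∃ ψ : Zt L, ∀ i, ψ.1 (ℓ i) = φ.1 (ℓ i) := ⟨φ, fun _ => rfl⟩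
  simp only [h, dif_pos]
  exact hg _ _ h.choose_spec

/-- The maps `B_A(C_X) : B_A(Z(B_A(X))) → B_A(X)`, `g ↦ g ∘ C_X`, and
`ρ_{B_A(X)} : B_A(X) → B_A(Z(B_A(X)))`, `f ↦ (φ ↦ φ(f))`, are mutually inverse
bijections; in particular `B_A(C_X) ∘ ρ_{B_A(X)}` is the identity on `B_A(X)`. -/
theorem stmt12 {A X : Type*} [Infinite A] [uA : UniformSpace A] (huA : uA = ⊥)
    [UniformSpace X] :
    ∃ hC : ∀ x : X, IsHom (BA A X) (fun f : BA A X => f.1 x),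
      ∃ hρ : ∀ f : BA A X, (fun φ : Zt (BA A X) => φ.1 f) ∈ BA A (Zt (BA A X)),
        ∃ hB : ∀ g : BA A (Zt (BA A X)),
            (fun x : X => g.1 (⟨fun f : BA A X => f.1 x, hC x⟩ : Zt (BA A X))) ∈ BA A X,
          Function.LeftInverse
            (fun g : BA A (Zt (BA A X)) =>
              (⟨fun x : X => g.1 ⟨fun f : BA A X => f.1 x, hC x⟩, hB g⟩ : BA A X))
            (fun f : BA A X =>
              (⟨fun φ : Zt (BA A X) => φ.1 f, hρ f⟩ : BA A (Zt (BA A X)))) ∧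
          Function.LeftInverse
            (fun f : BA A X =>
              (⟨fun φ : Zt (BA A X) => φ.1 f, hρ f⟩ : BA A (Zt (BA A X))))
            (fun g : BA A (Zt (BA A X)) =>
              (⟨fun x : X => g.1 ⟨fun f : BA A X => f.1 x, hC x⟩, hB g⟩ : BA A X)) := by
  have hUA : 𝓤 A = Filter.principal SetRel.id := by
    subst huA; exact bot_uniformity
  have hC : ∀ x : X, IsHom (BA A X) (fun f : BA A X => f.1 x) :=
    fun x => ⟨fun a h => rfl, fun n f g hg h => rfl⟩
  have hρ : ∀ f : BA A X, (fun φ : Zt (BA A X) => φ.1 f) ∈ BA A (Zt (BA A X)) := by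
    intro f
    show UniformContinuous fun φ : Zt (BA A X) => φ.1 f
    exact (Pi.uniformContinuous_proj (fun _ : BA A X => A) f).comp uniformContinuous_subtype_val
  have hCuc : UniformContinuous (fun x : X => (⟨fun f : BA A X => f.1 x, hC x⟩ : Zt (BA A X))) := by
    apply UniformContinuous.subtype_mk
    exact uniformContinuous_pi.2 fun f => f.2
  have hB : ∀ g : BA A (Zt (BA A X)),
      (fun x : X => g.1 (⟨fun f : BA A X => f.1 x, hC x⟩ : Zt (BA A X))) ∈ BA A X :=
    fun g => g.2.comp hCuc
  refine ⟨hC, hρ, hB, fun f => Subtype.ext rfl, fun g => ?_⟩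
  obtain ⟨n, ℓ, hkey⟩ := keylem hUA (BA A X) g.1 g.2
  obtain ⟨f, hfspec⟩ := exspec ℓ g.1 hkey
  have hcomp : (fun x : X => g.1 (⟨fun f : BA A X => f.1 x, hC x⟩ : Zt (BA A X)))
      = fun x : X => f fun i => (ℓ i).1 x := by
    funext x
    exact (hfspec ⟨fun f : BA A X => f.1 x, hC x⟩).symm
  have hmem : (fun x : X => f fun i => (ℓ i).1 x) ∈ BA A X := hcomp ▸ hB g
  apply Subtype.ext
  funext φ
  show φ.1 ⟨_, hB g⟩ = g.1 φ
  have heq : (⟨fun x : X => g.1 (⟨fun f : BA A X => f.1 x, hC x⟩ : Zt (BA A X)), hB g⟩ : BA A X)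
      = ⟨fun x : X => f fun i => (ℓ i).1 x, hmem⟩ := Subtype.ext hcomp
  rw [heq, φ.2.2 n f (fun i => (ℓ i).1) (fun i => (ℓ i).2) hmem]
  exact hfspec φ
end

section
/- Let L be a function algebra on a set I, let R ⊆ Z(L), and let φ ∈ Z(L). Then φ lies in the topological closure of R in Z(L) if and only if ⋂_{θ∈R} ker(θ) ⊆ ker(φ). -/
open scoped Uniformity

lemma key {A I : Type*} [Infinite A] {L : Set (I → A)} (hL : IsFnAlg L)
    {R : Set (Zt L)} {φ : Zt L}
    (hker : (⋂ θ ∈ R, kerOf (θ : Zt L).1) ⊆ kerOf φ.1)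
    (n : ℕ) (g : Fin n → L) :
    ∃ θ ∈ R, ∀ i, θ.1 (g i) = φ.1 (g i) := by
  classical
  obtain ⟨e⟩ : Nonempty ((Fin n → A) ↪ A) := by
    rw [← Cardinal.le_def, Cardinal.mk_arrow]
    simpa using Cardinal.power_nat_le (Cardinal.infinite_iff.mp ‹_›)
  set p : Fin n → A → A := fun i a => Function.invFun e a i with hp
  have hpe : ∀ (v : Fin n → A) i, p i (e v) = v i := fun v i => by
    simp [hp, Function.leftInverse_invFun e.injective v]
  set Gf : I → A := fun x => e fun i => (g i).1 x with hGf
  have hG : Gf ∈ L := hL.2 n e (fun i => (g i).1) (fun i => (g i).2)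
  -- any hom's value at g i is determined by its value at ⟨Gf, hG⟩
  have hdet : ∀ θ : Zt L, ∀ i, θ.1 (g i) = p i (θ.1 ⟨Gf, hG⟩) := by
    intro θ i
    have hmem : (fun x : I => (fun v : Fin 1 → A => p i (v 0)) fun j => (fun _ => Gf) j x) ∈ L := by
      have : (fun x : I => (fun v : Fin 1 → A => p i (v 0)) fun j => (fun _ : Fin 1 => Gf) j x)
          = (g i).1 := funext fun x => hpe _ i
      rw [this]; exact (g i).2
    have := θ.2.2 1 (fun v => p i (v 0)) (fun _ => Gf) (fun _ => hG) hmem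
    have hsub : (⟨fun x : I => (fun v : Fin 1 → A => p i (v 0)) fun j => (fun _ => Gf) j x, hmem⟩ : L) = g i :=
      Subtype.ext (funext fun x => hpe _ i)
    rw [hsub] at this
    exact this
  -- existence of θ ∈ R agreeing with φ at ⟨Gf, hG⟩
  by_cases hex : ∃ θ ∈ R, θ.1 ⟨Gf, hG⟩ = φ.1 ⟨Gf, hG⟩
  · obtain ⟨θ, hθR, hθ⟩ := hex
    exact ⟨θ, hθR, fun i => by rw [hdet θ i, hdet φ i, hθ]⟩
  · exfalso
    push_neg at hex
    set c : A := φ.1 ⟨Gf, hG⟩ with hc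
    obtain ⟨c', hc'⟩ := exists_ne c
    set u : A → A := fun a => if a = c then c' else a with hu
    have hG' : (fun x : I => (fun v : Fin 1 → A => u (v 0)) fun j => (fun _ => Gf) j x) ∈ L :=
      hL.2 1 (fun v => u (v 0)) (fun _ => Gf) (fun _ => hG)
    have hval : ∀ θ : Zt L, θ.1 ⟨_, hG'⟩ = u (θ.1 ⟨Gf, hG⟩) := fun θ =>
      θ.2.2 1 (fun v => u (v 0)) (fun _ => Gf) (fun _ => hG) hG'
    have hmemker : ((⟨Gf, hG⟩ : L), (⟨_, hG'⟩ : L)) ∈ ⋂ θ ∈ R, kerOf (θ : Zt L).1 := by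
      simp only [Set.mem_iInter]
      intro θ hθ
      have h1 : θ.1 ⟨Gf, hG⟩ ≠ c := hex θ hθ
      show θ.1 ⟨Gf, hG⟩ = θ.1 ⟨_, hG'⟩
      rw [hval θ, hu]; simp [h1]
    have := hker hmemker
    rw [kerOf, Set.mem_setOf_eq] at this
    simp only at this
    rw [hval φ, ← hc, hu] at this
    simp at this
    exact hc' this.symm

/-- For `R ⊆ Z(L)` and `φ ∈ Z(L)`, `φ` lies in the topological closure
of `R` in `Z(L)` if and only if `⋂_{θ ∈ R} ker θ ⊆ ker φ`. -/
theorem stmt13 {A I : Type*} [Infinite A] [uA : UniformSpace A] (huA : uA = ⊥)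
    (L : Set (I → A)) (hL : IsFnAlg L) (R : Set (Zt L)) (φ : Zt L) :
    φ ∈ closure R ↔ (⋂ θ ∈ R, kerOf (θ : Zt L).1) ⊆ kerOf φ.1 := by
  haveI : DiscreteTopology A := ⟨by rw [huA]; rfl⟩
  constructor
  · intro hφ p hp
    set U : Set (Zt L) := {ψ | ψ.1 p.1 = φ.1 p.1 ∧ ψ.1 p.2 = φ.1 p.2} with hU
    have hUopen : IsOpen U := by
      have c1 : Continuous fun ψ : Zt L => ψ.1 p.1 :=
        (continuous_apply p.1).comp continuous_subtype_val
      have c2 : Continuous fun ψ : Zt L => ψ.1 p.2 :=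
        (continuous_apply p.2).comp continuous_subtype_val
      exact ((isOpen_discrete {φ.1 p.1}).preimage c1).inter
        ((isOpen_discrete {φ.1 p.2}).preimage c2)
    obtain ⟨θ, hθU, hθR⟩ := mem_closure_iff.mp hφ U hUopen ⟨rfl, rfl⟩
    simp only [Set.mem_iInter] at hp
    have : θ.1 p.1 = θ.1 p.2 := hp θ hθR
    show φ.1 p.1 = φ.1 p.2
    rw [← hθU.1, ← hθU.2, this]
  · intro hker
    rw [mem_closure_iff]
    intro o ho hφo
    obtain ⟨V, hV, rfl⟩ := isOpen_induced_iff.mp ho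
    obtain ⟨F, w, hw, hsub⟩ := isOpen_pi_iff.mp hV φ.1 hφo
    obtain ⟨θ, hθR, hθ⟩ := key hL hker F.card fun i => F.equivFin.symm i
    refine ⟨θ, ?_, hθR⟩
    show θ.1 ∈ V
    apply hsub
    intro g hg
    have : θ.1 g = φ.1 g := by
      have := hθ (F.equivFin ⟨g, hg⟩)
      simpa using this
    rw [this]
    exact (hw g hg).2
end

section
/- Let L be a function algebra on a set I. A subset S ⊆ Z(L) is closed in the topology of Z(L) if and only if S = {φ ∈ Z(L) : ⋂_{θ∈S} ker(θ) ⊆ ker(φ)}; equivalently, the operator sending S to {φ ∈ Z(L) : ⋂_{θ∈S} ker(θ) ⊆ ker(φ)} is exactly the topological closure operator of Z(L). -/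
open scoped Uniformity

/-- A subset `S ⊆ Z(L)` is closed iff
`S = {φ ∈ Z(L) : ⋂_{θ ∈ S} ker θ ⊆ ker φ}`; equivalently, the operator
`S ↦ {φ : ⋂_{θ ∈ S} ker θ ⊆ ker φ}` is exactly the topological closure operator
of `Z(L)`. -/
theorem stmt14 {A I : Type*} [Infinite A] [uA : UniformSpace A] (huA : uA = ⊥)
    (L : Set (I → A)) (hL : IsFnAlg L) :
    (∀ S : Set (Zt L),
        IsClosed S ↔ S = {φ : Zt L | (⋂ θ ∈ S, kerOf (θ : Zt L).1) ⊆ kerOf φ.1}) ∧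
    ∀ S : Set (Zt L),
      closure S = {φ : Zt L | (⋂ θ ∈ S, kerOf (θ : Zt L).1) ⊆ kerOf φ.1} := by
  classical
  haveI : DiscreteTopology A := ⟨by rw [huA]; rfl⟩
  have key : ∀ S : Set (Zt L),
      closure S = {φ : Zt L | (⋂ θ ∈ S, kerOf (θ : Zt L).1) ⊆ kerOf φ.1} := by
    intro S
    ext φ
    simp only [Set.mem_setOf_eq]
    constructor
    · -- closure ⊆ ker condition
      intro hφ p hp
      have hU : IsOpen {ψ : Zt L | ψ.1 p.1 = φ.1 p.1 ∧ ψ.1 p.2 = φ.1 p.2} := by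
        have h1 : Continuous fun ψ : Zt L => ψ.1 p.1 :=
          (continuous_apply p.1).comp continuous_subtype_val
        have h2 : Continuous fun ψ : Zt L => ψ.1 p.2 :=
          (continuous_apply p.2).comp continuous_subtype_val
        exact (h1.isOpen_preimage _ (isOpen_discrete {φ.1 p.1})).inter
          (h2.isOpen_preimage _ (isOpen_discrete {φ.1 p.2}))
      obtain ⟨θ, ⟨hθ1, hθ2⟩, hθS⟩ :=
        mem_closure_iff.1 hφ _ hU ⟨rfl, rfl⟩
      have := Set.mem_iInter₂.1 hp θ hθS
      show φ.1 p.1 = φ.1 p.2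
      rw [← hθ1, ← hθ2]
      exact this
    · intro hker
      -- key finite agreement
      have agree : ∀ F : Set L, F.Finite → ∃ θ ∈ S, ∀ g ∈ F, θ.1 g = φ.1 g := by
        intro F hF
        by_contra hcon
        push_neg at hcon
        obtain ⟨c₀, c₁, hne⟩ := exists_pair_ne A
        set n := hF.toFinset.card with hn
        set e := hF.toFinset.equivFin with he
        set g : Fin n → L := fun i => (e.symm i : L) with hg
        have hrange : ∀ x ∈ F, ∃ i, g i = x := by
          intro x hx
          exact ⟨e ⟨x, hF.mem_toFinset.2 hx⟩, by simp [hg]⟩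
        set f : (Fin n → A) → A :=
          fun a => if a = (fun i => φ.1 (g i)) then c₀ else c₁ with hf
        have hG : (fun x : I => f fun i => (g i : I → A) x) ∈ L :=
          hL.2 n f (fun i => (g i : I → A)) (fun i => (g i).2)
        have hc₁ : (fun _ : I => c₁) ∈ L := hL.1 c₁
        have pairmem : ((⟨_, hG⟩ : L), (⟨_, hc₁⟩ : L)) ∈
            ⋂ θ ∈ S, kerOf (θ : Zt L).1 := by
          apply Set.mem_iInter₂.2
          intro θ hθ
          obtain ⟨x, hxF, hxne⟩ := hcon θ hθ
          show θ.1 ⟨_, hG⟩ = θ.1 ⟨_, hc₁⟩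
          rw [θ.2.2 n f (fun i => (g i : I → A)) (fun i => (g i).2) hG, θ.2.1 c₁ hc₁]
          have hdiff : (fun i => θ.1 ⟨(g i : I → A), (g i).2⟩) ≠ fun i => φ.1 (g i) := by
            obtain ⟨i, hi⟩ := hrange x hxF
            intro hcontra
            have h := congrFun hcontra i
            simp only [Subtype.coe_eta, hi] at h
            exact hxne h
          simp only [hf, if_neg hdiff]
        have hpq := hker pairmem
        have : φ.1 ⟨_, hG⟩ = φ.1 ⟨_, hc₁⟩ := hpq
        rw [φ.2.2 n f (fun i => (g i : I → A)) (fun i => (g i).2) hG, φ.2.1 c₁ hc₁] at this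
        have heq : (fun i => φ.1 ⟨(g i : I → A), (g i).2⟩) = fun i => φ.1 (g i) := by
          funext i; simp [Subtype.coe_eta]
        rw [heq] at this
        simp only [hf, if_pos rfl] at this
        exact hne this
      rw [mem_closure_iff_nhds]
      intro t ht
      rw [nhds_subtype_eq_comap] at ht
      obtain ⟨w, hw, hwt⟩ := Filter.mem_comap.1 ht
      rw [nhds_pi] at hw
      obtain ⟨F, hFfin, u, hu, hsub⟩ := Filter.mem_pi.1 hw
      obtain ⟨θ, hθS, hθag⟩ := agree F hFfin
      refine ⟨θ, hwt ?_, hθS⟩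
      apply hsub
      intro i hi
      rw [hθag i hi]
      have := hu i
      rw [nhds_discrete] at this
      exact this
  refine ⟨fun S => ?_, key⟩
  rw [← key S, ← closure_eq_iff_isClosed, eq_comm]
end

section
/- Let L be a function algebra on a set I. Then the set PC(L) of partitionable congruences of L is dense in the set LPC(L) of locally partitionable congruences of L, where LPC(L) carries the uniformity generated by the equivalence relations F_N for finitely generated subalgebras N of L: for every locally partitionable congruence θ and every finitely generated subalgebra N ⊆ L, there is a partitionable congruence ψ on L with θ ∩ (N × N) = ψ ∩ (N × N). -/
open scoped Uniformity

section Aux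

variable {A I : Type*}

lemma genBy_isFnAlg (S : Set (I → A)) : IsFnAlg (genBy S) := by
  constructor
  · intro a
    intro M hM
    exact hM.1.1 a
  · intro n f g hg
    intro M hM
    exact hM.1.2 n f g (fun i => hg i M hM)

lemma subset_genBy (S : Set (I → A)) : S ⊆ genBy S := by
  intro g hg M hM
  exact hM.2 hg

lemma genBy_rep {n : ℕ} (s : Fin n → I → A) {g : I → A} (hg : g ∈ genBy (Set.range s)) :
    ∃ f : (Fin n → A) → A, g = fun x => f fun i => s i x := by
  classical
  set M : Set (I → A) := {g | ∃ f : (Fin n → A) → A, g = fun x => f fun i => s i x} with hM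
  have hMalg : IsFnAlg M := by
    constructor
    · intro a; exact ⟨fun _ => a, rfl⟩
    · intro m F G hG
      choose f hf using hG
      refine ⟨fun t => F fun j => f j t, ?_⟩
      funext x
      simp only
      congr 1
      funext j
      exact congrFun (hf j) x
  have hSM : Set.range s ⊆ M := by
    rintro _ ⟨i, rfl⟩
    exact ⟨fun t => t i, rfl⟩
  exact hg M ⟨hMalg, hSM⟩

lemma hom_eval [Infinite A] (S : Set (I → A)) (hS : S.Finite)
    (φ : ↥(genBy S) → A) (hφ : IsHom (genBy S) φ) :
    ∃ x : I, ∀ g : ↥(genBy S), φ g = (g : I → A) x := by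
  classical
  obtain ⟨n, s, -, rfl⟩ := hS.fin_param
  have hsN : ∀ i, s i ∈ genBy (Set.range s) := fun i =>
    subset_genBy _ (Set.mem_range_self i)
  set a : Fin n → A := fun i => φ ⟨s i, hsN i⟩ with ha
  have hclaim : ∃ x : I, (fun i => s i x) = a := by
    by_contra hne
    push_neg at hne
    obtain ⟨b, c, hbc⟩ := exists_pair_ne A
    set h : (Fin n → A) → A := fun t => if ∃ x, (fun i => s i x) = t then b else c with hh
    have hmem : (fun x => h fun i => s i x) ∈ genBy (Set.range s) :=
      (genBy_isFnAlg _).2 n h s hsN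
    have heq1 : (fun x => h fun i => s i x) = fun _ : I => b := by
      funext x
      exact if_pos ⟨x, rfl⟩
    have hmem' : (fun _ : I => b) ∈ genBy (Set.range s) := heq1 ▸ hmem
    have e1 : φ ⟨fun x => h fun i => s i x, hmem⟩ = h a := hφ.2 n h s hsN hmem
    have e2 : φ ⟨fun x => h fun i => s i x, hmem⟩ = b := by
      have : (⟨fun x => h fun i => s i x, hmem⟩ : ↥(genBy (Set.range s))) =
          ⟨fun _ => b, hmem'⟩ := Subtype.ext heq1
      rw [this]
      exact hφ.1 b hmem'
    have e3 : h a = c := if_neg (by push_neg; exact hne)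
    rw [e2, e3] at e1
    exact hbc e1
  obtain ⟨x, hx⟩ := hclaim
  refine ⟨x, fun g => ?_⟩
  obtain ⟨f, hf⟩ := genBy_rep s g.2
  have hmem : (fun x => f fun i => s i x) ∈ genBy (Set.range s) := hf ▸ g.2
  have hg' : g = ⟨fun x => f fun i => s i x, hmem⟩ := Subtype.ext hf
  rw [hg', hφ.2 n f s hsN hmem]
  show f a = f fun i => s i x
  rw [hx]

lemma eval_isHom (L : Set (I → A)) (x : I) :
    IsHom L (fun g : L => (g : I → A) x) :=
  ⟨fun _ _ => rfl, fun _ _ _ _ _ => rfl⟩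

lemma iInter_ker_isCongruence (L : Set (I → A)) (R : Set (Zt L)) :
    IsCongruence L (⋂ φ ∈ R, kerOf (φ : Zt L).1) := by
  constructor
  · constructor
    · intro g
      simp [kerOf]
    · intro g h hgh
      simp only [Set.mem_iInter, kerOf, Set.mem_setOf_eq] at hgh ⊢
      intro φ hφ
      exact (hgh φ hφ).symm
    · intro g h k hgh hhk
      simp only [Set.mem_iInter, kerOf, Set.mem_setOf_eq] at hgh hhk ⊢
      intro φ hφ
      exact (hgh φ hφ).trans (hhk φ hφ)
  · intro n f g h hgh hg hh
    simp only [Set.mem_iInter, kerOf, Set.mem_setOf_eq] at hgh ⊢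
    intro φ hφ
    rw [φ.2.2 n f (fun i => (g i : I → A)) (fun i => (g i).2) hg,
        φ.2.2 n f (fun i => (h i : I → A)) (fun i => (h i).2) hh]
    congr 1
    funext i
    exact hgh i φ hφ

end Aux

/-- The partitionable congruences of `L` are dense in the locally
partitionable congruences of `L` (for the uniformity generated by the relations `F_N`,
`N` a finitely generated subalgebra): for every locally partitionable congruence `θ`
and every finitely generated subalgebra `N ⊆ L`, there is a partitionable congruence
`ψ` on `L` with `θ ∩ (N × N) = ψ ∩ (N × N)`. -/
theorem stmt16 {A I : Type*} [Infinite A] (L : Set (I → A)) (hL : IsFnAlg L)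
    (θ : Set (L × L)) (hθ : IsLocPartCong L θ)
    (N : Set (I → A)) (hNL : N ⊆ L) (hNfg : ∃ S : Set (I → A), S.Finite ∧ N = genBy S) :
    ∃ ψ : Set (L × L), IsPartCong L ψ ∧ restrictCong hNL θ = restrictCong hNL ψ := by
  obtain ⟨hcongθ, hloc⟩ := hθ
  obtain ⟨S, hSfin, hNS⟩ := hNfg
  subst hNS
  obtain ⟨hcN, R, hR⟩ := hloc (genBy S) hNL ⟨S, hSfin, rfl⟩
  choose xf hxf using fun φ : Zt (genBy S) => hom_eval S hSfin φ.1 φ.2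
  set ev : I → Zt L := fun x => ⟨fun g => (g : I → A) x, eval_isHom L x⟩ with hev
  set R' : Set (Zt L) := (fun φ => ev (xf φ)) '' R with hR'
  refine ⟨⋂ φ ∈ R', kerOf (φ : Zt L).1, ⟨iInter_ker_isCongruence L R', R', rfl⟩, ?_⟩
  rw [hR]
  ext p
  simp only [restrictCong, Set.mem_setOf_eq, Set.mem_iInter, kerOf, hR',
    Set.mem_image, forall_exists_index, and_imp]
  constructor
  · rintro hp φ' φ hφ rfl
    have h1 := hxf φ p.1
    have h2 := hxf φ p.2
    show (p.1 : I → A) (xf φ) = (p.2 : I → A) (xf φ)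
    rw [← h1, ← h2]
    exact hp φ hφ
  · intro hp φ hφ
    have := hp (ev (xf φ)) φ hφ rfl
    rw [hxf φ p.1, hxf φ p.2]
    exact this
end

section
/- Let L be a function algebra on a set I. The map g* sending a closed subset S of Z(L) to the congruence ⋂_{φ∈S} ker(φ) is a bijection from the set H(Z(L)) of closed subsets of Z(L) onto the set PC(L) of partitionable congruences of L, with inverse f* sending a partitionable congruence θ to {φ ∈ Z(L) : θ ⊆ ker(φ)}; moreover g* is a uniform homeomorphism when H(Z(L)) carries the hyperspace uniformity and PC(L) carries the uniformity generated by the relations F_N for finitely generated subalgebras N of L. -/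
open scoped Uniformity

/-- The hyperspace uniformity filter on the set of closed subsets of a uniform space,
generated by the relations `Ē = {(C,D) : C ⊆ E[D] ∧ D ⊆ E[C]}` for entourages `E`. -/
def hyperFil (X : Type*) [UniformSpace X] :
    Filter ({S : Set X // IsClosed S} × {S : Set X // IsClosed S}) :=
  ⨅ E ∈ 𝓤 X, Filter.principal
    {p | (∀ x ∈ p.1.1, ∃ s ∈ p.2.1, (s, x) ∈ E) ∧ ∀ x ∈ p.2.1, ∃ s ∈ p.1.1, (s, x) ∈ E}

/-- The uniformity filter on the set of partitionable congruences of `L`, generated by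
the relations `F_N = {(θ,ψ) : θ ∩ (N × N) = ψ ∩ (N × N)}` for finitely generated
subalgebras `N ⊆ L`. -/
def pcFil {A I : Type*} (L : Set (I → A)) :
    Filter ({θ : Set (L × L) // IsPartCong L θ} × {θ : Set (L × L) // IsPartCong L θ}) :=
  ⨅ (N : Set (I → A)) (h : N ⊆ L ∧ ∃ S : Set (I → A), S.Finite ∧ N = genBy S),
    Filter.principal {p | restrictCong h.1 p.1.1 = restrictCong h.1 p.2.1}

section Aux
variable {A I : Type*}

lemma genBy_subset {S L : Set (I → A)} (hL : IsFnAlg L) (h : S ⊆ L) : genBy S ⊆ L :=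
  Set.sInter_subset_of_mem ⟨hL, h⟩

lemma agree_on_genBy {L : Set (I → A)} (hL : IsFnAlg L) (φ ψ : Zt L)
    (S : Set (I → A))
    (hag : ∀ g (_ : g ∈ S) (hgL : g ∈ L), φ.1 ⟨g, hgL⟩ = ψ.1 ⟨g, hgL⟩)
    (hSL : S ⊆ L) :
    ∀ u (_ : u ∈ genBy S) (huL : u ∈ L), φ.1 ⟨u, huL⟩ = ψ.1 ⟨u, huL⟩ := by
  have hM : IsFnAlg {w : I → A | ∃ hw : w ∈ L, φ.1 ⟨w, hw⟩ = ψ.1 ⟨w, hw⟩} := by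
    constructor
    · intro a
      exact ⟨hL.1 a, by rw [φ.2.1 a (hL.1 a), ψ.2.1 a (hL.1 a)]⟩
    · intro n f g hg
      have hgL : ∀ i, g i ∈ L := fun i => (hg i).choose
      have hLfg := hL.2 n f g hgL
      refine ⟨hLfg, ?_⟩
      rw [φ.2.2 n f g hgL hLfg, ψ.2.2 n f g hgL hLfg]
      exact congrArg f (funext fun i => (hg i).choose_spec)
  have hsub : genBy S ⊆ {w : I → A | ∃ hw : w ∈ L, φ.1 ⟨w, hw⟩ = ψ.1 ⟨w, hw⟩} :=
    Set.sInter_subset_of_mem ⟨hM, fun g hg => ⟨hSL hg, hag g hg (hSL hg)⟩⟩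
  intro u hu huL
  obtain ⟨hw, he⟩ := hsub hu
  exact he

lemma exists_inj (A : Type*) [Infinite A] (n : ℕ) :
    ∃ e : (Fin n → A) → A, Function.Injective e := by
  induction n with
  | zero =>
    refine ⟨fun _ => Classical.arbitrary A, fun a b _ => funext fun i => ?_⟩
    exact i.elim0
  | succ n ih =>
    obtain ⟨e, he⟩ := ih
    have hcard : Cardinal.mk (A × A) = Cardinal.mk A := by
      simp only [Cardinal.mk_prod, Cardinal.lift_id]
      exact Cardinal.mul_eq_self (Cardinal.aleph0_le_mk A)
    obtain ⟨π⟩ := Cardinal.eq.mp hcard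
    refine ⟨fun v => π (v 0, e fun i : Fin n => v i.succ), fun v w h => ?_⟩
    have h2 := π.injective h
    have h0 : v 0 = w 0 := congrArg Prod.fst h2
    have hs : (fun i : Fin n => v i.succ) = fun i : Fin n => w i.succ :=
      he (congrArg Prod.snd h2)
    funext i
    refine Fin.cases h0 (fun j => ?_) i
    exact congrFun hs j

lemma key_lemma [Infinite A] {L : Set (I → A)} (hL : IsFnAlg L)
    {N : Set (I → A)} (hN : IsFnAlg N) (hNL : N ⊆ L)
    (F : Finset (I → A)) (hF : ↑F ⊆ N)
    (T : Set (Zt L)) (φ : Zt L)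
    (hker : ∀ (u v : L), (u : I → A) ∈ N → (v : I → A) ∈ N →
      (∀ ψ ∈ T, ψ.1 u = ψ.1 v) → φ.1 u = φ.1 v) :
    ∃ ψ ∈ T, ∀ (g : I → A) (_ : g ∈ F) (hgL : g ∈ L),
      ψ.1 ⟨g, hgL⟩ = φ.1 ⟨g, hgL⟩ := by
  classical
  set n := F.card with hn
  set g : Fin n → I → A := fun i => ((F.equivFin.symm i : F) : I → A) with hgdef
  have hgN : ∀ i, g i ∈ N := fun i => hF (F.equivFin.symm i).2
  obtain ⟨e, he⟩ := exists_inj A n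
  set G : I → A := fun x => e fun i => g i x with hGdef
  have hGN : G ∈ N := hN.2 n e g hgN
  have hGL : G ∈ L := hNL hGN
  have hval : ∀ (χ : Zt L) (i : Fin n) (h' : g i ∈ L),
      χ.1 ⟨g i, h'⟩ = Function.invFun e (χ.1 ⟨G, hGL⟩) i := by
    intro χ i h'
    set p : (Fin 1 → A) → A := fun v => Function.invFun e (v 0) i with hp
    have h1 : (fun x : I => p fun _ : Fin 1 => G x) ∈ L :=
      hNL (hN.2 1 p (fun _ => G) fun _ => hGN)
    have h2 := χ.2.2 1 p (fun _ => G) (fun _ => hGL) h1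
    have h3 : (⟨g i, h'⟩ : L) = ⟨fun x : I => p fun _ : Fin 1 => G x, h1⟩ := by
      apply Subtype.ext
      funext x
      show g i x = Function.invFun e (G x) i
      exact (congrFun (Function.leftInverse_invFun he fun j => g j x) i).symm
    rw [h3]
    exact h2
  have hmain : ∃ ψ ∈ T, ψ.1 ⟨G, hGL⟩ = φ.1 ⟨G, hGL⟩ := by
    by_contra hcon
    push_neg at hcon
    obtain ⟨b, hb⟩ := exists_ne (φ.1 ⟨G, hGL⟩)
    set f1 : (Fin 1 → A) → A := fun v => if v 0 = φ.1 ⟨G, hGL⟩ then φ.1 ⟨G, hGL⟩ else b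
      with hf1
    have huN : (fun x : I => f1 fun _ : Fin 1 => G x) ∈ N :=
      hN.2 1 f1 (fun _ => G) fun _ => hGN
    have huL : (fun x : I => f1 fun _ : Fin 1 => G x) ∈ L := hNL huN
    have hvN : (fun _ : I => b) ∈ N := hN.1 b
    have hvL : (fun _ : I => b) ∈ L := hNL hvN
    have heq := hker ⟨_, huL⟩ ⟨_, hvL⟩ huN hvN ?side
    case side =>
      intro ψ hψ
      rw [ψ.2.2 1 f1 (fun _ => G) (fun _ => hGL) huL, ψ.2.1 b hvL]
      have hne := hcon ψ hψ
      simp only [hf1, if_neg hne]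
    · rw [φ.2.2 1 f1 (fun _ => G) (fun _ => hGL) huL, φ.2.1 b hvL] at heq
      simp only [hf1, if_pos rfl] at heq
      exact hb heq.symm
  obtain ⟨ψ, hψT, hψG⟩ := hmain
  refine ⟨ψ, hψT, fun w hw hwL => ?_⟩
  set i := F.equivFin ⟨w, hw⟩ with hi
  have hwg : g i = w := by
    show ((F.equivFin.symm (F.equivFin ⟨w, hw⟩) : F) : I → A) = w
    rw [Equiv.symm_apply_apply]
  have hgiL : g i ∈ L := by rw [hwg]; exact hwL
  have hsub : (⟨w, hwL⟩ : L) = ⟨g i, hgiL⟩ := Subtype.ext hwg.symm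
  rw [hsub, hval ψ i hgiL, hval φ i hgiL, hψG]

end Aux

section Unif
open Filter
variable {A I : Type*}

lemma unif_mem_of_finite [uA : UniformSpace A] (huA : uA = ⊥)
    (L : Set (I → A)) (S' : Set L) (hS' : S'.Finite) :
    {p : Zt L × Zt L | ∀ g ∈ S', p.1.1 g = p.2.1 g} ∈ 𝓤 (Zt L) := by
  have hUA : 𝓤 A = 𝓟 SetRel.id := by rw [huA]; rfl
  rw [uniformity_subtype (p := fun φ : L → A => IsHom L φ)]
  refine ⟨{p : (L → A) × (L → A) | ∀ g ∈ S', p.1 g = p.2 g}, ?_, fun q hq => hq⟩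
  have hEq : {p : (L → A) × (L → A) | ∀ g ∈ S', p.1 g = p.2 g}
      = ⋂ g ∈ S', {p : (L → A) × (L → A) | p.1 g = p.2 g} := by
    ext p; simp
  rw [hEq]
  refine (Filter.biInter_mem hS').mpr fun g _ => ?_
  rw [Pi.uniformity]
  refine Filter.mem_iInf_of_mem g ⟨SetRel.id, ?_, fun p hp => hp⟩
  rw [hUA]
  exact Filter.mem_principal_self _

lemma unif_basis [uA : UniformSpace A] (huA : uA = ⊥)
    (L : Set (I → A)) :
    ∀ E ∈ 𝓤 (Zt L), ∃ S' : Set L, S'.Finite ∧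
      {p : Zt L × Zt L | ∀ g ∈ S', p.1.1 g = p.2.1 g} ⊆ E := by
  have hUA : 𝓤 A = 𝓟 SetRel.id := by rw [huA]; rfl
  intro E hE
  rw [uniformity_subtype (p := fun φ : L → A => IsHom L φ)] at hE
  obtain ⟨t, ht, hsub⟩ := hE
  rw [Pi.uniformity] at ht
  obtain ⟨Iset, hIfin, V, hV, -, hUV, -⟩ := Filter.mem_iInf'.mp ht
  refine ⟨Iset, hIfin, fun p hp => ?_⟩
  apply hsub
  show (p.1.1, p.2.1) ∈ t
  rw [hUV]
  refine Set.mem_iInter₂.mpr fun g hg => ?_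
  obtain ⟨W, hW, hWsub⟩ := hV g
  rw [hUA] at hW
  exact hWsub (Filter.mem_principal.mp hW (hp g hg))

end Unif

section Hyper
open Filter

lemma hyperFil_basis {X : Type*} [UniformSpace X]
    {t : Set ({S : Set X // IsClosed S} × {S : Set X // IsClosed S})}
    (ht : t ∈ hyperFil X) :
    ∃ E ∈ 𝓤 X, {p : {S : Set X // IsClosed S} × {S : Set X // IsClosed S} |
      (∀ x ∈ p.1.1, ∃ s ∈ p.2.1, (s, x) ∈ E) ∧ ∀ x ∈ p.2.1, ∃ s ∈ p.1.1, (s, x) ∈ E} ⊆ t := by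
  have hdir : DirectedOn ((fun E : Set (X × X) => Filter.principal
      {p : {S : Set X // IsClosed S} × {S : Set X // IsClosed S} |
        (∀ x ∈ p.1.1, ∃ s ∈ p.2.1, (s, x) ∈ E) ∧ ∀ x ∈ p.2.1, ∃ s ∈ p.1.1, (s, x) ∈ E})
      ⁻¹'o (· ≥ ·)) {E | E ∈ 𝓤 X} := by
    intro E₁ h₁ E₂ h₂
    refine ⟨E₁ ∩ E₂, Filter.inter_mem h₁ h₂, ?_, ?_⟩ <;>
    · refine Filter.principal_mono.mpr ?_
      rintro ⟨C, D⟩ ⟨hc1, hc2⟩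
      constructor
      · intro x hx
        obtain ⟨s, hs, hsx⟩ := hc1 x hx
        first
        | exact ⟨s, hs, hsx.1⟩
        | exact ⟨s, hs, hsx.2⟩
      · intro x hx
        obtain ⟨s, hs, hsx⟩ := hc2 x hx
        first
        | exact ⟨s, hs, hsx.1⟩
        | exact ⟨s, hs, hsx.2⟩
  have hne : {E : Set (X × X) | E ∈ 𝓤 X}.Nonempty := ⟨Set.univ, Filter.univ_mem⟩
  unfold hyperFil at ht
  obtain ⟨E, hE, htE⟩ := (Filter.mem_biInf_of_directed hdir hne).mp ht
  exact ⟨E, hE, Filter.mem_principal.mp htE⟩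

end Hyper


/-- The map `g*` sending a closed subset `S` of `Z(L)` to
`⋂_{φ ∈ S} ker φ` is a bijection from the closed subsets of `Z(L)` onto the
partitionable congruences of `L`, with inverse `f*` sending `θ` to
`{φ ∈ Z(L) : θ ⊆ ker φ}`; moreover `g*` is a uniform homeomorphism for the hyperspace
uniformity on `H(Z(L))` and the uniformity generated by the relations `F_N` on `PC(L)`. -/
theorem stmt17 {A I : Type*} [Infinite A] [uA : UniformSpace A] (huA : uA = ⊥)
    (L : Set (I → A)) (hL : IsFnAlg L) :
    ∃ hg : ∀ S : {S : Set (Zt L) // IsClosed S},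
        IsPartCong L (⋂ φ ∈ S.1, kerOf (φ : Zt L).1),
      ∃ hf : ∀ θ : {θ : Set (L × L) // IsPartCong L θ},
          IsClosed {φ : Zt L | θ.1 ⊆ kerOf φ.1},
        (Function.LeftInverse
            (fun θ : {θ : Set (L × L) // IsPartCong L θ} =>
              (⟨{φ : Zt L | θ.1 ⊆ kerOf φ.1}, hf θ⟩ : {S : Set (Zt L) // IsClosed S}))
            (fun S : {S : Set (Zt L) // IsClosed S} =>
              (⟨⋂ φ ∈ S.1, kerOf (φ : Zt L).1, hg S⟩ :
                {θ : Set (L × L) // IsPartCong L θ})) ∧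
          Function.LeftInverse
            (fun S : {S : Set (Zt L) // IsClosed S} =>
              (⟨⋂ φ ∈ S.1, kerOf (φ : Zt L).1, hg S⟩ :
                {θ : Set (L × L) // IsPartCong L θ}))
            (fun θ : {θ : Set (L × L) // IsPartCong L θ} =>
              (⟨{φ : Zt L | θ.1 ⊆ kerOf φ.1}, hf θ⟩ : {S : Set (Zt L) // IsClosed S}))) ∧
        Filter.map
          (Prod.map
            (fun S : {S : Set (Zt L) // IsClosed S} =>
              (⟨⋂ φ ∈ S.1, kerOf (φ : Zt L).1, hg S⟩ :
                {θ : Set (L × L) // IsPartCong L θ}))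
            (fun S : {S : Set (Zt L) // IsClosed S} =>
              (⟨⋂ φ ∈ S.1, kerOf (φ : Zt L).1, hg S⟩ :
                {θ : Set (L × L) // IsPartCong L θ})))
          (hyperFil (Zt L)) = pcFil L := by
  classical
  haveI hdt : DiscreteTopology A := ⟨by rw [huA]; rfl⟩
  -- membership characterization for the intersection of kernels
  have hmem : ∀ (T : Set (Zt L)) (p : L × L),
      p ∈ (⋂ φ ∈ T, kerOf (φ : Zt L).1) ↔ ∀ φ ∈ T, φ.1 p.1 = φ.1 p.2 := by
    intro T p
    simp [kerOf]
  -- g* lands in partitionable congruences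
  have hg : ∀ S : {S : Set (Zt L) // IsClosed S},
      IsPartCong L (⋂ φ ∈ S.1, kerOf (φ : Zt L).1) := by
    intro S
    refine ⟨⟨?_, ?_⟩, S.1, rfl⟩
    · constructor
      · intro u
        exact (hmem S.1 (u, u)).mpr fun φ _ => rfl
      · intro u v h
        exact (hmem S.1 _).mpr fun φ hφ => ((hmem S.1 _).mp h φ hφ).symm
      · intro u v w h1 h2
        exact (hmem S.1 _).mpr fun φ hφ =>
          ((hmem S.1 _).mp h1 φ hφ).trans ((hmem S.1 _).mp h2 φ hφ)
    · intro n f g h hgh hgL hhL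
      refine (hmem S.1 _).mpr fun φ hφ => ?_
      have e1 := φ.2.2 n f (fun i => (g i : I → A)) (fun i => (g i).2) hgL
      have e2 := φ.2.2 n f (fun i => (h i : I → A)) (fun i => (h i).2) hhL
      refine e1.trans (.trans ?_ e2.symm)
      exact congrArg f (funext fun i => (hmem S.1 _).mp (hgh i) φ hφ)
  -- f* lands in closed sets
  have hf : ∀ θ : {θ : Set (L × L) // IsPartCong L θ},
      IsClosed {φ : Zt L | θ.1 ⊆ kerOf φ.1} := by
    intro θ
    have hEq : {φ : Zt L | θ.1 ⊆ kerOf φ.1}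
        = ⋂ p ∈ θ.1, {φ : Zt L | φ.1 p.1 = φ.1 p.2} := by
      ext φ
      simp only [Set.mem_setOf_eq, Set.mem_iInter, Set.subset_def]
      exact Iff.rfl
    rw [hEq]
    exact isClosed_biInter fun p _ =>
      isClosed_eq ((continuous_apply p.1).comp continuous_subtype_val)
        ((continuous_apply p.2).comp continuous_subtype_val)
  -- g* ∘ f* = id
  have hLI2 : ∀ θ : {θ : Set (L × L) // IsPartCong L θ},
      (⋂ φ ∈ {φ : Zt L | θ.1 ⊆ kerOf φ.1}, kerOf (φ : Zt L).1) = θ.1 := by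
    intro θ
    apply subset_antisymm
    · obtain ⟨hc, R, hR⟩ := θ.2
      intro p hp
      rw [hR]
      refine Set.mem_iInter₂.mpr fun φ hφ => ?_
      refine Set.mem_iInter₂.mp hp φ ?_
      show θ.1 ⊆ kerOf φ.1
      rw [hR]
      exact Set.biInter_subset_of_mem hφ
    · intro p hp
      exact Set.mem_iInter₂.mpr fun φ hφ => hφ hp
  -- f* ∘ g* = id
  have hLI1 : ∀ S : {S : Set (Zt L) // IsClosed S},
      {φ : Zt L | (⋂ ψ ∈ S.1, kerOf (ψ : Zt L).1) ⊆ kerOf φ.1} = S.1 := by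
    intro S
    apply subset_antisymm
    · intro φ hφ
      rw [← S.2.closure_eq]
      refine UniformSpace.mem_closure_iff_ball.mpr fun {V} hV => ?_
      obtain ⟨S', hS'fin, hS'sub⟩ := unif_basis huA L V hV
      have hker : ∀ (u v : L), (u : I → A) ∈ L → (v : I → A) ∈ L →
          (∀ ψ ∈ S.1, ψ.1 u = ψ.1 v) → φ.1 u = φ.1 v := by
        intro u v _ _ hall
        exact hφ ((hmem S.1 (u, v)).mpr hall)
      have hFsub : ↑(Finset.image Subtype.val hS'fin.toFinset) ⊆ L := by
        intro w hw
        obtain ⟨u, _, rfl⟩ := Finset.mem_image.mp hw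
        exact u.2
      obtain ⟨ψ, hψS, hag⟩ :=
        key_lemma hL hL (subset_refl L) (Finset.image Subtype.val hS'fin.toFinset)
          hFsub S.1 φ hker
      refine ⟨ψ, ?_, hψS⟩
      apply hS'sub
      intro u huS'
      have hmemF : (u : I → A) ∈ Finset.image Subtype.val hS'fin.toFinset :=
        Finset.mem_image_of_mem Subtype.val (hS'fin.mem_toFinset.mpr huS')
      exact (hag u.1 hmemF u.2).symm
    · intro φ hφ
      exact fun p hp => Set.mem_iInter₂.mp hp φ hφ
  refine ⟨hg, hf, ⟨fun S => Subtype.ext (hLI1 S), fun θ => Subtype.ext (hLI2 θ)⟩, ?_⟩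
  -- the filter equality
  refine le_antisymm ?_ ?_
  · -- map g* hyperFil ≤ pcFil
    unfold pcFil
    refine le_iInf fun N => le_iInf fun hN => ?_
    rw [Filter.le_principal_iff, Filter.mem_map]
    have hNgen : N = genBy hN.2.choose := hN.2.choose_spec.2
    set S0 := hN.2.choose with hS0def
    have hS0fin : S0.Finite := hN.2.choose_spec.1
    have hS0L : S0 ⊆ L := fun g hgS => hN.1 (hNgen ▸ subset_genBy S0 hgS)
    set S' : Set L := Subtype.val ⁻¹' S0 with hS'def
    have hS'fin : S'.Finite :=
      hS0fin.preimage Subtype.val_injective.injOn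
    have hE := unif_mem_of_finite huA L S' hS'fin
    set E := {p : Zt L × Zt L | ∀ g ∈ S', p.1.1 g = p.2.1 g} with hEdef
    have hlow : hyperFil (Zt L) ≤ Filter.principal
        {p : {S : Set (Zt L) // IsClosed S} × {S : Set (Zt L) // IsClosed S} |
          (∀ x ∈ p.1.1, ∃ s ∈ p.2.1, (s, x) ∈ E) ∧
            ∀ x ∈ p.2.1, ∃ s ∈ p.1.1, (s, x) ∈ E} := by
      exact iInf₂_le E hE
    refine Filter.mem_of_superset (hlow (Filter.mem_principal_self _)) ?_
    rintro ⟨C, D⟩ ⟨h1, h2⟩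
    show restrictCong hN.1 (⋂ φ ∈ C.1, kerOf (φ : Zt L).1)
        = restrictCong hN.1 (⋂ φ ∈ D.1, kerOf (φ : Zt L).1)
    have main : ∀ (C' D' : {S : Set (Zt L) // IsClosed S}),
        (∀ x ∈ D'.1, ∃ s ∈ C'.1, (s, x) ∈ E) →
        restrictCong hN.1 (⋂ φ ∈ C'.1, kerOf (φ : Zt L).1) ⊆
          restrictCong hN.1 (⋂ φ ∈ D'.1, kerOf (φ : Zt L).1) := by
      rintro C' D' hCD ⟨⟨u, hu⟩, ⟨v, hv⟩⟩ hC
      refine Set.mem_iInter₂.mpr fun ψ hψD => ?_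
      obtain ⟨φ0, hφ0C, hφ0ψ⟩ := hCD ψ hψD
      have hagree := agree_on_genBy hL φ0 ψ S0
        (fun g hgS hgL => hφ0ψ ⟨g, hgL⟩ hgS) hS0L
      have hu' : φ0.1 ⟨u, hN.1 hu⟩ = ψ.1 ⟨u, hN.1 hu⟩ :=
        hagree u (hNgen ▸ hu) (hN.1 hu)
      have hv' : φ0.1 ⟨v, hN.1 hv⟩ = ψ.1 ⟨v, hN.1 hv⟩ :=
        hagree v (hNgen ▸ hv) (hN.1 hv)
      have hCφ0 : φ0.1 ⟨u, hN.1 hu⟩ = φ0.1 ⟨v, hN.1 hv⟩ :=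
        Set.mem_iInter₂.mp hC φ0 hφ0C
      show ψ.1 ⟨u, hN.1 hu⟩ = ψ.1 ⟨v, hN.1 hv⟩
      rw [← hu', ← hv', hCφ0]
    exact subset_antisymm (main C D h2) (main D C h1)
  · -- pcFil ≤ map g* hyperFil
    intro t ht
    rw [Filter.mem_map] at ht
    obtain ⟨E, hE𝓤, hEsub⟩ := hyperFil_basis ht
    obtain ⟨S', hS'fin, hS'sub⟩ := unif_basis huA L E hE𝓤
    set S0 : Set (I → A) := Subtype.val '' S' with hS0def
    set N := genBy S0 with hNdef
    have hNL : N ⊆ L := by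
      refine genBy_subset hL ?_
      rintro g ⟨⟨g0, hg0L⟩, _, rfl⟩
      exact hg0L
    have hNh : N ⊆ L ∧ ∃ S, S.Finite ∧ N = genBy S :=
      ⟨hNL, S0, hS'fin.image _, rfl⟩
    have hpc : pcFil L ≤ Filter.principal
        {p : {θ : Set (L × L) // IsPartCong L θ} × {θ : Set (L × L) // IsPartCong L θ} |
          restrictCong hNh.1 p.1.1 = restrictCong hNh.1 p.2.1} := by
      exact iInf₂_le N hNh
    refine Filter.mem_of_superset (hpc (Filter.mem_principal_self _)) ?_
    rintro ⟨θ₁, θ₂⟩ hres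
    have hFsub : ↑(Finset.image Subtype.val hS'fin.toFinset) ⊆ N := by
      intro w hw
      obtain ⟨u, huF, rfl⟩ := Finset.mem_image.mp hw
      exact subset_genBy S0 ⟨u, hS'fin.mem_toFinset.mp huF, rfl⟩
    have helper : ∀ (θa θb : {θ : Set (L × L) // IsPartCong L θ}),
        restrictCong hNh.1 θa.1 = restrictCong hNh.1 θb.1 →
        ∀ φ ∈ {φ : Zt L | θa.1 ⊆ kerOf φ.1},
          ∃ ψ ∈ {ψ : Zt L | θb.1 ⊆ kerOf ψ.1}, (ψ, φ) ∈ E := by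
      intro θa θb hab φ hφC
      have hker : ∀ (u v : L), (u : I → A) ∈ N → (v : I → A) ∈ N →
          (∀ ψ ∈ {ψ : Zt L | θb.1 ⊆ kerOf ψ.1}, ψ.1 u = ψ.1 v) → φ.1 u = φ.1 v := by
        intro u v huN hvN hall
        have hb : (u, v) ∈ θb.1 := by
          rw [← hLI2 θb]
          exact Set.mem_iInter₂.mpr hall
        have hrestr : ((⟨(u : I → A), huN⟩, ⟨(v : I → A), hvN⟩) : N × N)
            ∈ restrictCong hNh.1 θb.1 := hb
        have ha : ((⟨(u : I → A), huN⟩, ⟨(v : I → A), hvN⟩) : N × N)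
            ∈ restrictCong hNh.1 θa.1 := by rw [hab]; exact hrestr
        exact hφC ha
      obtain ⟨ψ, hψ, hag⟩ :=
        key_lemma hL (genBy_isFnAlg S0) hNL (Finset.image Subtype.val hS'fin.toFinset)
          hFsub {ψ : Zt L | θb.1 ⊆ kerOf ψ.1} φ hker
      refine ⟨ψ, hψ, ?_⟩
      apply hS'sub
      intro u huS'
      have hmemF : (u : I → A) ∈ Finset.image Subtype.val hS'fin.toFinset :=
        Finset.mem_image_of_mem Subtype.val (hS'fin.mem_toFinset.mpr huS')
      exact hag u.1 hmemF u.2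
    have hmemE : ((⟨{φ : Zt L | θ₁.1 ⊆ kerOf φ.1}, hf θ₁⟩,
        ⟨{φ : Zt L | θ₂.1 ⊆ kerOf φ.1}, hf θ₂⟩) :
          {S : Set (Zt L) // IsClosed S} × {S : Set (Zt L) // IsClosed S})
        ∈ {p : {S : Set (Zt L) // IsClosed S} × {S : Set (Zt L) // IsClosed S} |
            (∀ x ∈ p.1.1, ∃ s ∈ p.2.1, (s, x) ∈ E) ∧
              ∀ x ∈ p.2.1, ∃ s ∈ p.1.1, (s, x) ∈ E} := by
      constructor
      · intro φ hφ
        exact helper θ₁ θ₂ hres φ hφ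
      · intro φ hφ
        exact helper θ₂ θ₁ hres.symm φ hφ
    have h3 := hEsub hmemE
    have e1 : (⟨⋂ φ ∈ {φ : Zt L | θ₁.1 ⊆ kerOf φ.1}, kerOf (φ : Zt L).1,
        hg ⟨_, hf θ₁⟩⟩ : {θ : Set (L × L) // IsPartCong L θ}) = θ₁ :=
      Subtype.ext (hLI2 θ₁)
    have e2 : (⟨⋂ φ ∈ {φ : Zt L | θ₂.1 ⊆ kerOf φ.1}, kerOf (φ : Zt L).1,
        hg ⟨_, hf θ₂⟩⟩ : {θ : Set (L × L) // IsPartCong L θ}) = θ₂ :=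
      Subtype.ext (hLI2 θ₂)
    rw [← e1, ← e2]
    exact h3
end
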